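/- arXiv:2008.01925 — 6 statements merged into one kernel-verified Lean document; each statement's English description precedes it below -/
import Mathlib

section
/- Let (S, ·) be a layered semigroup with layering map ℓ : S → ℕ and layers S_i = ℓ⁻¹({i}), let F be a locally finite collection of regressive maps on S, and suppose there exists an F-Ramsey sequence (U_i)_{i∈ℕ} of ultrafilters on S. Then for every n ∈ ℕ, every r ≥ 1, and every coloring c : S → {0,…,r−1}, there exists a sequence (x_i)_{i≥1} of elements of S_n such that for every k ≤ n the set S_k ∩ { f_1(x_{n_1}) · f_2(x_{n_2}) · ⋯ · f_ℓ(x_{n_ℓ}) : ℓ ≥ 1, 1 ≤ n_1 < n_2 < ⋯ < n_ℓ, f_1,…,f_ℓ ∈ F } is c-monochromatic (c is constant on it). -/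
/-- A regressive map on a layered semigroup `(S, ·, ℓ)`. -/
def IsRegressive {S : Type*} [Semigroup S] (ℓ : S → ℕ) (f : S → S) : Prop :=
  (∀ s t : S, f (s * t) = f s * f t) ∧
  (∀ s : S, ℓ (f s) ≤ ℓ s) ∧
  (∀ s t : S, ℓ s ≤ ℓ t → ℓ (f s) ≤ ℓ (f t)) ∧
  (∀ s t : S, |(ℓ (f s) : ℤ) - (ℓ (f t) : ℤ)| ≤ |(ℓ s : ℤ) - (ℓ t : ℤ)|)

/-- A collection of maps on `S` is locally finite if for every `i` the set of
restrictions to `ℓ⁻¹({0,…,i})` is finite. -/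
def IsLocallyFinite {S : Type*} (ℓ : S → ℕ) (F : Set (S → S)) : Prop :=
  ∀ i : ℕ, Set.Finite { g : {s : S // ℓ s ≤ i} → S | ∃ f ∈ F, g = fun s => f s.val }

/-- The product of two ultrafilters on a semigroup:
`A ∈ uMul U V ↔ {s | {t | s * t ∈ A} ∈ V} ∈ U`. -/
def uMul {S : Type*} [Semigroup S] (U V : Ultrafilter S) : Ultrafilter S :=
  U.bind fun s => V.map fun t => s * t

/-- A sequence of ultrafilters `U i` concentrated on the layers `S_i` is `F`-coherent if
it is closed under pushforwards along all maps in `F`. -/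
def FCoherent {S : Type*} [Semigroup S] (ℓ : S → ℕ) (F : Set (S → S))
    (U : ℕ → Ultrafilter S) : Prop :=
  (∀ i : ℕ, {s : S | ℓ s = i} ∈ U i) ∧
  (∀ f ∈ F, ∀ j : ℕ, ∃ k ≤ j, Ultrafilter.map f (U j) = U k)

/-- An `F`-coherent sequence is `F`-Ramsey if moreover `U j · U i = U i · U j = U j`
whenever `i ≤ j`. -/
def FRamsey {S : Type*} [Semigroup S] (ℓ : S → ℕ) (F : Set (S → S))
    (U : ℕ → Ultrafilter S) : Prop :=
  FCoherent ℓ F U ∧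
  ∀ i j : ℕ, i ≤ j → uMul (U j) (U i) = U j ∧ uMul (U i) (U j) = U j

/-- Fold of a nonempty tuple from the left: `g 0 * g 1 * ⋯ * g m`. -/
def finFold {S : Type*} (op : S → S → S) (m : ℕ) (g : Fin (m + 1) → S) : S :=
  (List.ofFn fun a : Fin m => g a.succ).foldl op (g 0)

/-- The set of all products `f₁(x_{n₁}) · ⋯ · f_ℓ(x_{n_ℓ})` with `ℓ ≥ 1`,
`n₁ < ⋯ < n_ℓ` and `f₁, …, f_ℓ ∈ F`. -/
def ComboSet {S : Type*} [Semigroup S] (F : Set (S → S)) (x : ℕ → S) : Set S :=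
  { s | ∃ (m : ℕ) (idx : Fin (m + 1) → ℕ) (fs : Fin (m + 1) → S → S),
      StrictMono idx ∧ (∀ a, fs a ∈ F) ∧
      s = finFold (· * ·) m fun a => fs a (x (idx a)) }

/-!
Fix `n`. Each `U j` decides a colour `col j` of `c`, so `A = {s | c s = col (ℓ s)}` lies in every
`U j`, and `c` is constant on each layer of `A`. Since `U k · U j = U (max k j)`, the ultrafilters
`U 0, …, U n` form a finite semigroup, and the Galvin–Glazer star construction yields `A⋆ ⊆ A`
with `A⋆ ∈ U j` and `s⁻¹ A⋆ ∈ U j` for all `s ∈ A⋆`, `j ≤ n`. Coherence pulls these sets back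
along every `f ∈ F` to `U n`-large sets, and local finiteness makes the intersection over `F`
finite. So the `x i ∈ S_n` can be chosen one at a time keeping the finitely many combinations
of `x 0, …, x i` inside `A⋆`.
-/

lemma mem_uMul {S : Type*} [Semigroup S] {U V : Ultrafilter S} {A : Set S} :
    A ∈ uMul U V ↔ {s : S | (s * ·) ⁻¹' A ∈ V} ∈ U := by
  change A ∈ Filter.bind (↑U) (fun s => ↑(V.map fun t => s * t)) ↔ _
  rw [Filter.mem_bind']
  rfl

lemma Ultrafilter.exists_preimage_singleton_mem {α β : Type*} [Finite β] (U : Ultrafilter α)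
    (c : α → β) : ∃ b, c ⁻¹' {b} ∈ U := by
  obtain ⟨b, hb⟩ := (U.map c).eq_pure_of_finite
  exact ⟨b, Ultrafilter.mem_map.1 (hb ▸ Ultrafilter.mem_pure.2 rfl)⟩

section Star

variable {S : Type*} [Semigroup S] {𝒰 : Set (Ultrafilter S)} {A : Set S}

/-- Galvin–Glazer's `A⋆`, taken simultaneously for all ultrafilters of `𝒰`. -/
def starSet (𝒰 : Set (Ultrafilter S)) (A : Set S) : Set S :=
  {s | s ∈ A ∧ ∀ V ∈ 𝒰, (s * ·) ⁻¹' A ∈ V}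

lemma starSet_mem (h𝒰 : 𝒰.Finite) (hmul : ∀ U ∈ 𝒰, ∀ V ∈ 𝒰, uMul U V ∈ 𝒰)
    (hA : ∀ U ∈ 𝒰, A ∈ U) {U : Ultrafilter S} (hU : U ∈ 𝒰) : starSet 𝒰 A ∈ U := by
  have hprod : ∀ V ∈ 𝒰, {s | (s * ·) ⁻¹' A ∈ V} ∈ U := fun V hV =>
    mem_uMul.1 (hA _ (hmul U hU V hV))
  filter_upwards [hA U hU, (Filter.biInter_mem h𝒰).2 hprod] with s hsA hs
  exact ⟨hsA, fun V hV => Set.mem_iInter₂.1 hs V hV⟩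

lemma preimage_mul_starSet_mem (h𝒰 : 𝒰.Finite) (hmul : ∀ U ∈ 𝒰, ∀ V ∈ 𝒰, uMul U V ∈ 𝒰)
    {s : S} (hs : s ∈ starSet 𝒰 A) {V : Ultrafilter S} (hV : V ∈ 𝒰) :
    (s * ·) ⁻¹' starSet 𝒰 A ∈ V := by
  have hprod : ∀ W ∈ 𝒰, {t | (t * ·) ⁻¹' ((s * ·) ⁻¹' A) ∈ W} ∈ V := fun W hW =>
    mem_uMul.1 (hs.2 _ (hmul V hV W hW))
  filter_upwards [hs.2 V hV, (Filter.biInter_mem h𝒰).2 hprod] with t htA ht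
  refine ⟨htA, fun W hW => ?_⟩
  simpa only [Set.mem_ofPred_eq, Set.preimage_preimage, mul_assoc] using
    Set.mem_iInter₂.1 ht W hW

end Star

lemma finFold_succ {S : Type*} (op : S → S → S) (m : ℕ) (g : Fin (m + 2) → S) :
    finFold op (m + 1) g = op (finFold op m fun a => g a.castSucc) (g (Fin.last (m + 1))) := by
  unfold finFold
  rw [List.ofFn_succ', List.concat_eq_append, List.foldl_concat]
  simp [Fin.succ_castSucc, -Fin.castSucc_succ]

theorem exists_comboSet_subset {S : Type*} [Semigroup S] {F : Set (S → S)} {G T : Set S}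
    (hfin : ∀ z ∈ T, ((fun f : S → S => f z) '' F).Finite)
    (hext : ∀ V : Set S, V.Finite → V ⊆ G →
      ∃ z ∈ T, ∀ f ∈ F, f z ∈ G ∧ ∀ y ∈ V, y * f z ∈ G) :
    ∃ x : ℕ → S, (∀ i, x i ∈ T) ∧ ComboSet F x ⊆ G := by
  choose pick hpickT hpick using fun V : {V : Set S // V.Finite ∧ V ⊆ G} =>
    hext V.1 V.2.1 V.2.2
  let values (V : {V : Set S // V.Finite ∧ V ⊆ G}) : Set S := (fun f => f (pick V)) '' F
  have hvalues (V) : values V ⊆ G := by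
    rintro _ ⟨f, hf, rfl⟩
    exact (hpick V f hf).1
  -- `extend V` adds to the combinations `V` of `x 0, …, x (i-1)` those ending in `x i = pick V`.
  let extend (V : {V : Set S // V.Finite ∧ V ⊆ G}) : {V : Set S // V.Finite ∧ V ⊆ G} :=
    ⟨V.1 ∪ values V ∪ Set.image2 (· * ·) V.1 (values V),
      (V.2.1.union (hfin _ (hpickT V))).union (V.2.1.image2 _ (hfin _ (hpickT V))),
      Set.union_subset (Set.union_subset V.2.2 (hvalues V)) <| by
        rintro _ ⟨y, hy, _, ⟨f, hf, rfl⟩, rfl⟩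
        exact (hpick V f hf).2 y hy⟩
  let W (i : ℕ) := extend^[i] ⟨∅, Set.finite_empty, Set.empty_subset G⟩
  have hW_succ (i : ℕ) : W (i + 1) = extend (W i) := Function.iterate_succ_apply' ..
  have hW_mono : Monotone fun i => (W i).1 := monotone_nat_of_le_succ fun i => by
    rw [hW_succ]
    exact Set.subset_union_left.trans Set.subset_union_left
  have hcombo : ∀ (m : ℕ) (idx : Fin (m + 1) → ℕ) (fs : Fin (m + 1) → S → S),
      StrictMono idx → (∀ a, fs a ∈ F) →
      (finFold (· * ·) m fun a => fs a (pick (W (idx a)))) ∈ (W (idx (Fin.last m) + 1)).1 := by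
    intro m
    induction m with
    | zero =>
      intro idx fs _ hfs
      rw [hW_succ]
      exact Or.inl (Or.inr ⟨fs 0, hfs 0, rfl⟩)
    | succ m ih =>
      intro idx fs hidx hfs
      have hlast : idx (Fin.last m).castSucc + 1 ≤ idx (Fin.last (m + 1)) :=
        hidx (Fin.castSucc_lt_last _)
      have hprefix := hW_mono hlast <|
        ih (fun a => idx a.castSucc) (fun a => fs a.castSucc)
          (hidx.comp Fin.strictMono_castSucc) fun a => hfs _
      rw [finFold_succ, hW_succ]
      exact Or.inr ⟨_, hprefix, _, ⟨fs (Fin.last (m + 1)), hfs _, rfl⟩, rfl⟩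
  refine ⟨fun i => pick (W i), fun i => hpickT _, ?_⟩
  rintro _ ⟨m, idx, fs, hidx, hfs, rfl⟩
  exact (W _).2.2 (hcombo m idx fs hidx hfs)

namespace IsLocallyFinite

variable {S : Type*} {ℓ : S → ℕ} {F : Set (S → S)}

lemma finite_image_eval (hlf : IsLocallyFinite ℓ F) {z : S} {i : ℕ} (hz : ℓ z ≤ i) :
    ((fun f : S → S => f z) '' F).Finite := by
  refine ((hlf i).image fun g => g ⟨z, hz⟩).subset ?_
  rintro _ ⟨f, hf, rfl⟩
  exact ⟨_, ⟨f, hf, rfl⟩, rfl⟩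

/-- On `ℓ⁻¹({0,…,i})`, the condition `f z ∈ B` depends only on one of finitely many
restrictions of `f`, so the intersection over all `f ∈ F` is a finite one. -/
lemma setOf_forall_apply_mem (hlf : IsLocallyFinite ℓ F) {i : ℕ} {W : Filter S}
    (hW : {z | ℓ z ≤ i} ∈ W) {B : Set S} (hB : ∀ f ∈ F, f ⁻¹' B ∈ W) :
    {z | ∀ f ∈ F, f z ∈ B} ∈ W := by
  have hrestr : ∀ g ∈ {g : {s : S // ℓ s ≤ i} → S | ∃ f ∈ F, g = fun s => f s.val},
      {z | ∀ hz : ℓ z ≤ i, g ⟨z, hz⟩ ∈ B} ∈ W := by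
    rintro _ ⟨f, hf, rfl⟩
    filter_upwards [hB f hf] with z hz _ using hz
  filter_upwards [hW, (Filter.biInter_mem (hlf i)).2 hrestr] with z hz hzB f hf
  exact Set.mem_iInter₂.1 hzB _ ⟨f, hf, rfl⟩ hz

end IsLocallyFinite

lemma FCoherent.exists_layer_forall_apply_mem {S : Type*} [Semigroup S] {ℓ : S → ℕ}
    {F : Set (S → S)} {U : ℕ → Ultrafilter S} (hU : FCoherent ℓ F U)
    (hlf : IsLocallyFinite ℓ F) {n : ℕ} {G : Set S} (hG : ∀ j ≤ n, G ∈ U j)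
    (hGmul : ∀ s ∈ G, ∀ j ≤ n, (s * ·) ⁻¹' G ∈ U j) {V : Set S} (hV : V.Finite)
    (hVG : V ⊆ G) : ∃ z ∈ {s | ℓ s = n}, ∀ f ∈ F, f z ∈ G ∧ ∀ y ∈ V, y * f z ∈ G := by
  have hB : ∀ f ∈ F, f ⁻¹' (G ∩ ⋂ y ∈ V, (y * ·) ⁻¹' G) ∈ U n := by
    intro f hf
    obtain ⟨k, hk, hmap⟩ := hU.2 f hf n
    rw [← Ultrafilter.mem_map, hmap]
    exact Filter.inter_mem (hG k hk)
      ((Filter.biInter_mem hV).2 fun y hy => hGmul y (hVG hy) k hk)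
  have hlayer : {z | ℓ z ≤ n} ∈ U n := Filter.mem_of_superset (hU.1 n) fun _ => le_of_eq
  obtain ⟨z, hz, hzB⟩ :=
    Ultrafilter.nonempty_of_mem (Filter.inter_mem (hU.1 n) (hlf.setOf_forall_apply_mem hlayer hB))
  exact ⟨z, hz, fun f hf => ⟨(hzB f hf).1, fun y hy => Set.mem_iInter₂.1 (hzB f hf).2 y hy⟩⟩

lemma FRamsey.uMul_eq {S : Type*} [Semigroup S] {ℓ : S → ℕ} {F : Set (S → S)}
    {U : ℕ → Ultrafilter S} (hU : FRamsey ℓ F U) (k j : ℕ) :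
    uMul (U k) (U j) = U (max k j) := by
  rcases le_total k j with h | h
  · rw [max_eq_right h, (hU.2 k j h).2]
  · rw [max_eq_left h, (hU.2 j k h).1]

theorem ramsey_statement_infinite_fixed_layer_general {S : Type*} [Semigroup S] (ℓ : S → ℕ)
    (F : Set (S → S))
    (hlf : IsLocallyFinite ℓ F)
    (U : ℕ → Ultrafilter S) (hU : FRamsey ℓ F U)
    (n r : ℕ) (c : S → Fin r) :
    ∃ x : ℕ → S, (∀ i, ℓ (x i) = n) ∧
      ∀ k ≤ n, ∀ y ∈ {s : S | ℓ s = k} ∩ ComboSet F x,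
        ∀ z ∈ {s : S | ℓ s = k} ∩ ComboSet F x, c y = c z := by
  choose col hcol using fun j => (U j).exists_preimage_singleton_mem c
  set A := {s | c s = col (ℓ s)}
  have hA : ∀ j, A ∈ U j := fun j => by
    filter_upwards [hU.1.1 j, hcol j] with s (hs : ℓ s = j) (hcs : c s = col j)
    show c s = col (ℓ s)
    rw [hs, hcs]
  set 𝒰 := U '' Set.Iic n
  have h𝒰 : 𝒰.Finite := (Set.finite_Iic n).image U
  have hmul : ∀ V ∈ 𝒰, ∀ W ∈ 𝒰, uMul V W ∈ 𝒰 := by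
    rintro _ ⟨k, hk, rfl⟩ _ ⟨j, hj, rfl⟩
    exact ⟨max k j, Set.mem_Iic.2 (max_le hk hj), (hU.uMul_eq k j).symm⟩
  have hG : ∀ j ≤ n, starSet 𝒰 A ∈ U j := fun j hj =>
    starSet_mem h𝒰 hmul (by rintro _ ⟨i, -, rfl⟩; exact hA i) ⟨j, hj, rfl⟩
  have hGmul : ∀ s ∈ starSet 𝒰 A, ∀ j ≤ n, (s * ·) ⁻¹' starSet 𝒰 A ∈ U j :=
    fun s hs j hj => preimage_mul_starSet_mem h𝒰 hmul hs ⟨j, hj, rfl⟩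
  obtain ⟨x, hxn, hxG⟩ := exists_comboSet_subset
    (fun z hz => hlf.finite_image_eval (le_of_eq hz))
    fun V hV hVG => hU.1.exists_layer_forall_apply_mem hlf hG hGmul hV hVG
  refine ⟨x, hxn, fun k _ y ⟨hyk, hy⟩ z ⟨hzk, hz⟩ => ?_⟩
  have hcy : c y = col (ℓ y) := (hxG hy).1
  have hcz : c z = col (ℓ z) := (hxG hz).1
  rw [hcy, hcz, show ℓ y = k from hyk, show ℓ z = k from hzk]

/-- If a layered semigroup `(S, ℓ)` with a locally finite collection `F` of regressive
maps admits an `F`-Ramsey sequence of ultrafilters, then for every `n`, every finite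
coloring of `S` admits a sequence `(x_i)` in `S_n` all of whose combinations lying in a
layer `S_k` with `k ≤ n` form a monochromatic set. -/
theorem ramsey_statement_infinite_fixed_layer {S : Type*} [Semigroup S] (ℓ : S → ℕ)
    (hlay : ∀ s t : S, ℓ (s * t) = max (ℓ s) (ℓ t))
    (F : Set (S → S)) (hreg : ∀ f ∈ F, IsRegressive ℓ f)
    (hlf : IsLocallyFinite ℓ F)
    (U : ℕ → Ultrafilter S) (hU : FRamsey ℓ F U)
    (n r : ℕ) (hr : 1 ≤ r) (c : S → Fin r) :
    ∃ x : ℕ → S, (∀ i, ℓ (x i) = n) ∧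
      ∀ k ≤ n, ∀ y ∈ {s : S | ℓ s = k} ∩ ComboSet F x,
        ∀ z ∈ {s : S | ℓ s = k} ∩ ComboSet F x, c y = c z :=
  ramsey_statement_infinite_fixed_layer_general ℓ F hlf U hU n r c
end

section
/- Let (S, ·) be a layered semigroup with layering map ℓ : S → ℕ and layers S_i = ℓ⁻¹({i}), let F be a locally finite collection of regressive maps on S, and suppose there exists an F-Ramsey sequence (U_i)_{i∈ℕ} of ultrafilters on S. Then for every n ∈ ℕ, every r ≥ 1, and every coloring c : S → {0,…,r−1}, there exists x ∈ S_n such that for every k ≤ n the set S_k ∩ { f(x) : f ∈ F } is c-monochromatic (c is constant on it). -/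
namespace Filter

theorem eventually_forall_of_finite_restrictions {α β : Type*} {l : Filter α} {p : α → Prop}
    (hp : ∀ᶠ x in l, p x) {F : Set (α → β)}
    (hF : {g : {x // p x} → β | ∃ f ∈ F, g = fun x => f x.val}.Finite)
    {q : β → Prop} (hq : ∀ f ∈ F, ∀ᶠ x in l, q (f x)) :
    ∀ᶠ x in l, ∀ f ∈ F, q (f x) := by
  set restrict : (α → β) → {x // p x} → β := fun f x => f x.val
  have himage : restrict '' F = {g | ∃ f ∈ F, g = restrict f} := by
    ext g; exact exists_congr fun f => and_congr_right fun _ => eq_comm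
  obtain ⟨F₀, hF₀F, hbij⟩ := Set.exists_subset_bijOn F restrict
  have hF₀ : F₀.Finite := .of_finite_image (hbij.image_eq ▸ himage ▸ hF) hbij.injOn
  have hall : ∀ᶠ x in l, ∀ f ∈ F₀, q (f x) :=
    (eventually_all_finite hF₀).2 fun f hf => hq f (hF₀F hf)
  filter_upwards [hp, hall] with x hpx hx f hf
  obtain ⟨f₀, hf₀, hrestrict⟩ := hbij.surjOn ⟨f, hf, rfl⟩
  have hfx : f₀ x = f x := congrFun hrestrict ⟨x, hpx⟩
  exact hfx ▸ hx f₀ hf₀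

end Filter

theorem FCoherent.exists_layer_coloring {S β : Type*} [Semigroup S] [Finite β] {ℓ : S → ℕ}
    {F : Set (S → S)} {U : ℕ → Ultrafilter S} (hU : FCoherent ℓ F U) (c : S → β) :
    ∃ col : ℕ → β, ∀ f ∈ F, ∀ j, ∀ᶠ x in U j, c (f x) = col (ℓ (f x)) := by
  choose col hcol using fun k =>
    Ultrafilter.eventually_exists_iff.1 (Filter.Eventually.of_forall fun s => ⟨c s, rfl⟩ :
      ∀ᶠ s in U k, ∃ v, c s = v)
  refine ⟨col, fun f hf j => ?_⟩
  obtain ⟨k, -, hk⟩ := hU.2 f hf j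
  have hlayer : ∀ᶠ s in U k, ℓ s = k := hU.1 k
  have hgood : ∀ᶠ s in U k, c s = col (ℓ s) := by
    filter_upwards [hlayer, hcol k] with s hs hcs
    rw [hs, hcs]
  rwa [← hk] at hgood

theorem ramsey_statement_single_general {S : Type*} [Semigroup S] (ℓ : S → ℕ)
    (F : Set (S → S))
    (hlf : IsLocallyFinite ℓ F)
    (U : ℕ → Ultrafilter S) (hU : FRamsey ℓ F U)
    (n r : ℕ) (c : S → Fin r) :
    ∃ x : S, ℓ x = n ∧
      ∀ k ≤ n, ∀ y ∈ {s : S | ℓ s = k} ∩ {s : S | ∃ f ∈ F, s = f x},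
        ∀ z ∈ {s : S | ℓ s = k} ∩ {s : S | ∃ f ∈ F, s = f x}, c y = c z := by
  obtain ⟨col, hcol⟩ := hU.1.exists_layer_coloring c
  have hlayer : ∀ᶠ x in U n, ℓ x = n := hU.1.1 n
  have hgood : ∀ᶠ x in U n, ∀ f ∈ F, c (f x) = col (ℓ (f x)) :=
    Filter.eventually_forall_of_finite_restrictions (q := fun s => c s = col (ℓ s))
      (hlayer.mono fun _ h => h.le) (hlf n) fun f hf => hcol f hf n
  obtain ⟨x, hxn, hx⟩ := (hlayer.and hgood).exists
  refine ⟨x, hxn, fun k _ y ⟨hyk, f, hf, hy⟩ z ⟨hzk, g, hg, hz⟩ => ?_⟩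
  subst hy hz
  rw [hx f hf, hx g hg, show ℓ (f x) = k from hyk, show ℓ (g x) = k from hzk]

/-- If a layered semigroup `(S, ℓ)` with a locally finite collection `F` of regressive
maps admits an `F`-Ramsey sequence of ultrafilters, then for every `n`, every finite
coloring of `S` admits an `x ∈ S_n` such that for every `k ≤ n` the set
`S_k ∩ {f(x) : f ∈ F}` is monochromatic. -/
theorem ramsey_statement_single {S : Type*} [Semigroup S] (ℓ : S → ℕ)
    (hlay : ∀ s t : S, ℓ (s * t) = max (ℓ s) (ℓ t))
    (F : Set (S → S)) (hreg : ∀ f ∈ F, IsRegressive ℓ f)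
    (hlf : IsLocallyFinite ℓ F)
    (U : ℕ → Ultrafilter S) (hU : FRamsey ℓ F U)
    (n r : ℕ) (hr : 1 ≤ r) (c : S → Fin r) :
    ∃ x : S, ℓ x = n ∧
      ∀ k ≤ n, ∀ y ∈ {s : S | ℓ s = k} ∩ {s : S | ∃ f ∈ F, s = f x},
        ∀ z ∈ {s : S | ℓ s = k} ∩ {s : S | ∃ f ∈ F, s = f x}, c y = c z :=
  ramsey_statement_single_general ℓ F hlf U hU n r c
end

section
/- Let (S, ·) be a layered semigroup with layering map ℓ : S → ℕ and layers S_i = ℓ⁻¹({i}), and let F be a locally finite collection of regressive maps on S. If there exists an F-coherent sequence (U_i)_{i∈ℕ} of ultrafilters on S, then there exists an F-Ramsey sequence (V_i)_{i∈ℕ} of ultrafilters on S. -/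
open Function MulOpposite

attribute [local instance] Ultrafilter.mul Ultrafilter.semigroup

section Words

variable {M N : Type*} [Semigroup M] [Semigroup N]

/-- `upWord E j m = E j * E (j + 1) * ⋯ * E m` for `j ≤ m`, and `upWord E j m = E m` for
`m ≤ j`. -/
def upWord (E : ℕ → M) (j : ℕ) : ℕ → M
  | 0 => E 0
  | m + 1 => if m < j then E (m + 1) else upWord E j m * E (m + 1)

/-- `downWord E j m = E m * ⋯ * E (j + 1) * E j` for `j ≤ m`, and `downWord E j m = E m` for
`m ≤ j`. -/
def downWord (E : ℕ → M) (j m : ℕ) : M :=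
  unop (upWord (op ∘ E) j m)

variable {E : ℕ → M} {j m : ℕ}

theorem upWord_of_le (h : m ≤ j) : upWord E j m = E m := by
  cases m with
  | zero => rfl
  | succ m => simp [upWord, show m < j by omega]

theorem upWord_succ (h : j ≤ m) : upWord E j (m + 1) = upWord E j m * E (m + 1) := by
  simp [upWord, show ¬m < j by omega]

theorem upWord_mul_self (hE : ∀ n, IsIdempotentElem (E n)) (m : ℕ) :
    upWord E j m * E m = upWord E j m := by
  rcases le_or_gt m j with h | h
  · rw [upWord_of_le h, (hE m).eq]
  · obtain ⟨m, rfl⟩ : ∃ k, m = k + 1 := ⟨m - 1, by omega⟩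
    rw [upWord_succ (by omega), mul_assoc, (hE _).eq]

theorem map_upWord (Φ : N →ₙ* M) {E' : ℕ → N} {φ : ℕ → ℕ} (hΦ : ∀ n, Φ (E' n) = E (φ n))
    (hφ : ∀ n, φ n ≤ n) (hmono : Monotone φ) (hstep : ∀ n, φ (n + 1) ≤ φ n + 1)
    (hE : ∀ n, IsIdempotentElem (E n)) (habs : ∀ k < j, E k * E (k + 1) = E (k + 1))
    (m : ℕ) : Φ (upWord E' j m) = upWord E j (φ m) := by
  induction m with
  | zero => rw [upWord_of_le (Nat.zero_le _), hΦ, upWord_of_le ((hφ 0).trans (Nat.zero_le _))]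
  | succ m ih =>
    rcases lt_or_ge m j with h | h
    · rw [upWord_of_le h, hΦ, upWord_of_le ((hφ _).trans h)]
    rw [upWord_succ h, map_mul, ih, hΦ]
    obtain h₁ | h₁ : φ (m + 1) = φ m ∨ φ (m + 1) = φ m + 1 := by
      have := hmono (m.le_add_right 1); have := hstep m; omega
    · rw [h₁, upWord_mul_self hE]
    rw [h₁]
    rcases lt_or_ge (φ m) j with h₂ | h₂
    · rw [upWord_of_le h₂.le, upWord_of_le h₂, habs _ h₂]
    · rw [upWord_succ h₂]

theorem upWord_mem {G : ℕ → Set M} (hG : ∀ a b x y, x ∈ G a → y ∈ G b → x * y ∈ G (max a b))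
    (hE : ∀ n, E n ∈ G n) (m : ℕ) : upWord E j m ∈ G m := by
  induction m with
  | zero => exact hE 0
  | succ m ih =>
    rcases lt_or_ge m j with h | h
    · rw [upWord_of_le h]; exact hE _
    · rw [upWord_succ h]; simpa using hG _ _ _ _ ih (hE (m + 1))

theorem downWord_of_le (h : m ≤ j) : downWord E j m = E m := by
  simp [downWord, upWord_of_le h]

theorem downWord_succ (h : j ≤ m) : downWord E j (m + 1) = E (m + 1) * downWord E j m := by
  simp [downWord, upWord_succ h]

theorem map_downWord (Φ : N →ₙ* M) {E' : ℕ → N} {φ : ℕ → ℕ} (hΦ : ∀ n, Φ (E' n) = E (φ n))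
    (hφ : ∀ n, φ n ≤ n) (hmono : Monotone φ) (hstep : ∀ n, φ (n + 1) ≤ φ n + 1)
    (hE : ∀ n, IsIdempotentElem (E n)) (habs : ∀ k < j, E (k + 1) * E k = E (k + 1))
    (m : ℕ) : Φ (downWord E' j m) = downWord E j (φ m) :=
  congrArg unop <| map_upWord (MulHom.op Φ) (E := op ∘ E) (fun n => congrArg op (hΦ n)) hφ hmono
    hstep (fun n => congrArg op (hE n).eq) (fun k hk => congrArg op (habs k hk)) m

theorem downWord_mem {G : ℕ → Set M} (hG : ∀ a b x y, x ∈ G a → y ∈ G b → x * y ∈ G (max a b))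
    (hE : ∀ n, E n ∈ G n) (m : ℕ) : downWord E j m ∈ G m :=
  upWord_mem (G := fun n => unop ⁻¹' G n)
    (fun a b x y hx hy => by simpa [max_comm] using hG _ _ _ _ hy hx) hE m

theorem mul_eq_right_of_forall_succ {x : ℕ → M} (hx : ∀ n, IsIdempotentElem (x n))
    (h : ∀ n, x n * x (n + 1) = x (n + 1)) {a b : ℕ} (hab : a ≤ b) : x a * x b = x b := by
  induction b, hab using Nat.le_induction with
  | base => exact hx a
  | succ b _ ih => rw [← h b, ← mul_assoc, ih]

theorem mul_eq_left_of_forall_succ {x : ℕ → M} (hx : ∀ n, IsIdempotentElem (x n))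
    (h : ∀ n, x (n + 1) * x n = x (n + 1)) {a b : ℕ} (hab : a ≤ b) : x b * x a = x b :=
  congrArg unop <| mul_eq_right_of_forall_succ (x := op ∘ x) (fun n => congrArg op (hx n).eq)
    (fun n => congrArg op (h n)) hab

end Words

namespace Ultrafilter

theorem uMul_eq_mul {S : Type*} [Semigroup S] (U V : Ultrafilter S) : uMul U V = U * V :=
  Ultrafilter.ext fun _ => Iff.rfl

@[simps]
def mapMulHom {S T : Type*} [Mul S] [Mul T] (f : S →ₙ* T) : Ultrafilter S →ₙ* Ultrafilter T where
  toFun := map f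
  map_mul' U V := Ultrafilter.ext fun A => by
    change (∀ᶠ s in (U : Filter S), ∀ᶠ t in (V : Filter S), f (s * t) ∈ A) ↔
      ∀ᶠ s in (U : Filter S), ∀ᶠ t in (V : Filter S), f s * f t ∈ A
    simp only [map_mul]

theorem continuous_map {α β : Type*} (f : α → β) :
    Continuous (map f : Ultrafilter α → Ultrafilter β) :=
  ultrafilterBasis_is_basis.continuous_iff.2 <| Set.forall_mem_range.2 fun s =>
    ultrafilter_isOpen_basic (f ⁻¹' s)

end Ultrafilter

section Layered

variable {S : Type*} {ℓ : S → ℕ}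

theorem layer_eq_of_mem {U : Ultrafilter S} {a b : ℕ} (ha : {s | ℓ s = a} ∈ U)
    (hb : {s | ℓ s = b} ∈ U) : a = b := by
  obtain ⟨s, hsa, hsb⟩ := Ultrafilter.nonempty_of_mem (Filter.inter_mem ha hb)
  exact hsa.symm.trans hsb

variable [Semigroup S] {F : Set (S → S)}

theorem layer_mem_mul (hlay : ∀ s t : S, ℓ (s * t) = max (ℓ s) (ℓ t)) {a b : ℕ}
    {U V : Ultrafilter S} (hU : {s | ℓ s = a} ∈ U) (hV : {s | ℓ s = b} ∈ V) :
    {s | ℓ s = max a b} ∈ U * V := by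
  change ∀ᶠ s in (U : Filter S), ∀ᶠ t in (V : Filter S), ℓ (s * t) = max a b
  filter_upwards [hU] with s hs
  filter_upwards [hV] with t ht
  rw [hlay, hs, ht]

theorem IsRegressive.exists_semiconj {f : S → S} (hf : IsRegressive ℓ f) (hℓ : Surjective ℓ) :
    ∃ φ : ℕ → ℕ, Semiconj ℓ f φ ∧ (∀ n, φ n ≤ n) ∧ Monotone φ ∧ ∀ n, φ (n + 1) ≤ φ n + 1 := by
  obtain ⟨-, hle, hmono, hlip⟩ := hf
  let g := surjInv hℓ
  have hg : ∀ n, ℓ (g n) = n := surjInv_eq hℓ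
  refine ⟨fun n => ℓ (f (g n)), fun s => ?_, fun n => ?_, fun a b hab => ?_, fun n => ?_⟩
  · exact le_antisymm (hmono _ _ (hg _).ge) (hmono _ _ (hg _).le)
  · simpa [hg] using hle (g n)
  · exact hmono _ _ (by simpa [hg] using hab)
  · have := abs_le.1 (hlip (g (n + 1)) (g n))
    simp only [hg, Nat.cast_add, Nat.cast_one, add_sub_cancel_left, abs_one] at this
    dsimp only
    omega

def IsRegressive.toMulHom {f : S → S} (hf : IsRegressive ℓ f) : S →ₙ* S :=
  ⟨f, hf.1⟩

variable {W : ℕ → Ultrafilter S}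

theorem FCoherent.surjective (hW : FCoherent ℓ F W) : Surjective ℓ :=
  fun n => Ultrafilter.nonempty_of_mem (hW.1 n)

theorem FCoherent.map_eq {f : S → S} {φ : ℕ → ℕ} (hW : FCoherent ℓ F W) (hf : f ∈ F)
    (hφ : Semiconj ℓ f φ) (n : ℕ) : Ultrafilter.map f (W n) = W (φ n) := by
  obtain ⟨k, -, hk⟩ := hW.2 f hf n
  have hmem : {s | ℓ s = φ n} ∈ Ultrafilter.map f (W n) := by
    rw [Ultrafilter.mem_map]
    filter_upwards [hW.1 n] with s (hs : ℓ s = n)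
    show ℓ (f s) = φ n
    rw [hφ s, hs]
  rw [hk] at hmem ⊢
  rw [layer_eq_of_mem hmem (hW.1 k)]

theorem isClosed_setOf_fCoherent : IsClosed {W : ℕ → Ultrafilter S | FCoherent ℓ F W} := by
  simp only [FCoherent, Set.ofPred_and, Set.ofPred_forall]
  refine IsClosed.inter (isClosed_iInter fun n => ?_)
    (isClosed_iInter fun f => isClosed_iInter fun _ => isClosed_iInter fun n => ?_)
  · exact (ultrafilter_isClosed_basic _).preimage (continuous_apply (A := fun _ => Ultrafilter S) n)
  have : {W : ℕ → Ultrafilter S | ∃ k ≤ n, Ultrafilter.map f (W n) = W k} =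
      ⋃ k ∈ Set.Iic n, {W | Ultrafilter.map f (W n) = W k} := by
    ext; simp
  rw [this]
  exact (Set.finite_Iic n).isClosed_biUnion fun k _ =>
    isClosed_eq ((Ultrafilter.continuous_map f).comp (continuous_apply n)) (continuous_apply k)

end Layered

section Coherent

variable {S : Type*} [Semigroup S] {ℓ : S → ℕ} {F : Set (S → S)}

theorem FCoherent.mul (hlay : ∀ s t : S, ℓ (s * t) = max (ℓ s) (ℓ t))
    (hreg : ∀ f ∈ F, IsRegressive ℓ f) {V W : ℕ → Ultrafilter S} (hV : FCoherent ℓ F V)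
    (hW : FCoherent ℓ F W) : FCoherent ℓ F (V * W) := by
  refine ⟨fun n => by simpa using layer_mem_mul hlay (hV.1 n) (hW.1 n), fun f hf n => ?_⟩
  obtain ⟨φ, hφ, hle, -⟩ := (hreg f hf).exists_semiconj hV.surjective
  refine ⟨φ n, hle n, ?_⟩
  change Ultrafilter.mapMulHom (hreg f hf).toMulHom (V n * W n) = V (φ n) * W (φ n)
  rw [map_mul, Ultrafilter.mapMulHom_apply, Ultrafilter.mapMulHom_apply]
  exact congrArg₂ (· * ·) (hV.map_eq hf hφ n) (hW.map_eq hf hφ n)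

variable {E : ℕ → Ultrafilter S} {j : ℕ}

theorem FCoherent.upWord (hlay : ∀ s t : S, ℓ (s * t) = max (ℓ s) (ℓ t))
    (hreg : ∀ f ∈ F, IsRegressive ℓ f) (hE : FCoherent ℓ F E)
    (hidem : ∀ n, IsIdempotentElem (E n)) (habs : ∀ k < j, E k * E (k + 1) = E (k + 1)) :
    FCoherent ℓ F (upWord E j) := by
  have hlayer := upWord_mem (G := fun n => {u : Ultrafilter S | {s | ℓ s = n} ∈ u}) (E := E)
    (j := j) (fun _ _ _ _ => layer_mem_mul hlay) hE.1
  refine ⟨hlayer, fun f hf n => ?_⟩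
  obtain ⟨φ, hφ, hle, hmono, hstep⟩ := (hreg f hf).exists_semiconj hE.surjective
  exact ⟨φ n, hle n, map_upWord (Ultrafilter.mapMulHom (hreg f hf).toMulHom) (hE.map_eq hf hφ)
    hle hmono hstep hidem habs n⟩

theorem FCoherent.downWord (hlay : ∀ s t : S, ℓ (s * t) = max (ℓ s) (ℓ t))
    (hreg : ∀ f ∈ F, IsRegressive ℓ f) (hE : FCoherent ℓ F E)
    (hidem : ∀ n, IsIdempotentElem (E n)) (habs : ∀ k < j, E (k + 1) * E k = E (k + 1)) :
    FCoherent ℓ F (downWord E j) := by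
  have hlayer := downWord_mem (G := fun n => {u : Ultrafilter S | {s | ℓ s = n} ∈ u}) (E := E)
    (j := j) (fun _ _ _ _ => layer_mem_mul hlay) hE.1
  refine ⟨hlayer, fun f hf n => ?_⟩
  obtain ⟨φ, hφ, hle, hmono, hstep⟩ := (hreg f hf).exists_semiconj hE.surjective
  exact ⟨φ n, hle n, map_downWord (Ultrafilter.mapMulHom (hreg f hf).toMulHom) (hE.map_eq hf hφ)
    hle hmono hstep hidem habs n⟩

theorem exists_isIdempotentElem_of_isClosed {ι : Type*} {X : Set (ι → Ultrafilter S)}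
    (hne : X.Nonempty) (hX : IsClosed X) (hmul : ∀ x ∈ X, ∀ y ∈ X, x * y ∈ X) :
    ∃ E ∈ X, IsIdempotentElem E :=
  exists_idempotent_in_compact_subsemigroup (M := ι → Ultrafilter S)
    (fun R => continuous_pi fun i =>
      (Ultrafilter.continuous_mul_left (R i)).comp (continuous_apply i))
    X hne hX.isCompact hmul

end Coherent

theorem exists_seq_of_forall_exists_succ {α : Type*} {P : ℕ → α → Prop}
    {R : ℕ → α → α → Prop} (h₀ : ∃ a, P 0 a) (h : ∀ n a, P n a → ∃ b, P (n + 1) b ∧ R n a b) :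
    ∃ x : ℕ → α, ∀ n, P n (x n) ∧ R n (x n) (x (n + 1)) := by
  obtain ⟨a₀, ha₀⟩ := h₀
  choose g hg using h
  let y : (n : ℕ) → {a // P n a} :=
    fun n => Nat.rec ⟨a₀, ha₀⟩ (fun n a => ⟨g n a a.2, (hg n a a.2).1⟩) n
  exact ⟨fun n => (y n).1, fun n => ⟨(y n).2, (hg n _ (y n).2).2⟩⟩

section Ramsey

variable {S : Type*} [Semigroup S] {ℓ : S → ℕ} {F : Set (S → S)}

def RamseyUpTo (ℓ : S → ℕ) (F : Set (S → S)) (j : ℕ) (V : ℕ → Ultrafilter S) : Prop :=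
  FCoherent ℓ F V ∧ (∀ i ≤ j, IsIdempotentElem (V i)) ∧
    ∀ i < j, V i * V (i + 1) = V (i + 1) ∧ V (i + 1) * V i = V (i + 1)

variable {j : ℕ} {V W : ℕ → Ultrafilter S}

theorem RamseyUpTo.of_eq (hV : RamseyUpTo ℓ F j V) (hW : FCoherent ℓ F W)
    (h : ∀ i ≤ j, W i = V i) : RamseyUpTo ℓ F j W := by
  refine ⟨hW, fun i hi => ?_, fun i hi => ?_⟩
  · rw [h i hi]; exact hV.2.1 i hi
  · rw [h i hi.le, h (i + 1) hi]; exact hV.2.2 i hi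

theorem ramseyUpTo_succ_iff : RamseyUpTo ℓ F (j + 1) V ↔ RamseyUpTo ℓ F j V ∧
    IsIdempotentElem (V (j + 1)) ∧ V j * V (j + 1) = V (j + 1) ∧ V (j + 1) * V j = V (j + 1) := by
  simp only [RamseyUpTo, Nat.le_succ_iff, Nat.lt_succ_iff_lt_or_eq, or_imp, forall_and,
    forall_eq]
  tauto

theorem RamseyUpTo.exists_isIdempotentElem_extension
    (hlay : ∀ s t : S, ℓ (s * t) = max (ℓ s) (ℓ t)) (hreg : ∀ f ∈ F, IsRegressive ℓ f)
    (hV : RamseyUpTo ℓ F j V) {K : Set (ℕ → Ultrafilter S)}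
    (hK : IsClosed K) (hKmul : ∀ x ∈ K, ∀ y ∈ K, x * y ∈ K) (hW : W ∈ K)
    (hWcoh : FCoherent ℓ F W) (hWV : ∀ i ≤ j, W i = V i) :
    ∃ E ∈ K, RamseyUpTo ℓ F j E ∧ (∀ i ≤ j, E i = V i) ∧ IsIdempotentElem E := by
  let X := K ∩ {E | FCoherent ℓ F E} ∩ ⋂ i ≤ j, {E | E i = V i}
  have hX : IsClosed X := (hK.inter isClosed_setOf_fCoherent).inter <| isClosed_biInter
    fun i _ => isClosed_eq (continuous_apply i) continuous_const
  have hXmul : ∀ x ∈ X, ∀ y ∈ X, x * y ∈ X := by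
    simp only [X, Set.mem_inter_iff, Set.mem_iInter, Set.mem_ofPred_eq]
    rintro x ⟨⟨hxK, hx⟩, hxV⟩ y ⟨⟨hyK, hy⟩, hyV⟩
    refine ⟨⟨hKmul x hxK y hyK, hx.mul hlay hreg hy⟩, fun i hi => ?_⟩
    rw [Pi.mul_apply, hxV i hi, hyV i hi, (hV.2.1 i hi).eq]
  have hXne : X.Nonempty := ⟨W, ⟨hW, hWcoh⟩, Set.mem_iInter₂.2 hWV⟩
  obtain ⟨E, ⟨⟨hEK, hE⟩, hEmem⟩, hEidem⟩ := exists_isIdempotentElem_of_isClosed hXne hX hXmul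
  have hEV : ∀ i ≤ j, E i = V i := Set.mem_iInter₂.1 hEmem
  exact ⟨E, hEK, hV.of_eq hE hEV, hEV, hEidem⟩

theorem RamseyUpTo.exists_succ (hlay : ∀ s t : S, ℓ (s * t) = max (ℓ s) (ℓ t))
    (hreg : ∀ f ∈ F, IsRegressive ℓ f) (hV : RamseyUpTo ℓ F j V) :
    ∃ V', RamseyUpTo ℓ F (j + 1) V' ∧ ∀ i ≤ j, V' i = V i := by
  obtain ⟨E, -, hE, hEV, hEidem⟩ := hV.exists_isIdempotentElem_extension hlay hreg
    isClosed_univ (fun _ _ _ _ => trivial) (Set.mem_univ V) hV.1 fun _ _ => rfl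
  -- `W ↦ V j * W (j + 1)` is not continuous, so left absorption comes afterwards from an up-word.
  let K := {W : ℕ → Ultrafilter S | W (j + 1) * V j = W (j + 1)}
  have hK : IsClosed K := isClosed_eq
    ((Ultrafilter.continuous_mul_left (V j)).comp (continuous_apply _)) (continuous_apply _)
  have hKmul : ∀ x ∈ K, ∀ y ∈ K, x * y ∈ K := fun x _ y (hy : _ = _) => by
    change x (j + 1) * y (j + 1) * V j = x (j + 1) * y (j + 1)
    rw [mul_assoc, hy]
  have hdown : downWord E j ∈ K := by
    change downWord E j (j + 1) * V j = downWord E j (j + 1)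
    rw [downWord_succ le_rfl, downWord_of_le le_rfl, hEV j le_rfl, mul_assoc,
      (hV.2.1 j le_rfl).eq]
  obtain ⟨E', hE'mem, hE', hE'V, hE'idem⟩ := hV.exists_isIdempotentElem_extension hlay hreg hK
    hKmul hdown (hE.1.downWord hlay hreg (congrFun hEidem) fun k hk => (hE.2.2 k hk).2)
    fun i hi => (downWord_of_le hi).trans (hEV i hi)
  have hE'K : E' (j + 1) * V j = E' (j + 1) := hE'mem
  have hup : ∀ i ≤ j, upWord E' j i = V i := fun i hi => (upWord_of_le hi).trans (hE'V i hi)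
  have hup_succ : upWord E' j (j + 1) = V j * E' (j + 1) := by
    rw [upWord_succ le_rfl, hup j le_rfl]
  have hE'idem : ∀ n, IsIdempotentElem (E' n) := congrFun hE'idem
  refine ⟨upWord E' j, ramseyUpTo_succ_iff.2 ⟨hV.of_eq ?_ hup, ?_, ?_, ?_⟩, hup⟩
  · exact hE'.1.upWord hlay hreg hE'idem fun k hk => (hE'.2.2 k hk).1
  · rw [IsIdempotentElem, hup_succ, mul_assoc, ← mul_assoc (E' _), hE'K, (hE'idem _).eq]
  · rw [hup j le_rfl, hup_succ, ← mul_assoc, (hV.2.1 j le_rfl).eq]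
  · rw [hup j le_rfl, hup_succ, mul_assoc, hE'K]

theorem fRamsey_of_ramseyUpTo {D : ℕ → ℕ → Ultrafilter S} (hD : ∀ j, RamseyUpTo ℓ F j (D j))
    (hDD : ∀ j, ∀ i ≤ j, D (j + 1) i = D j i) : FRamsey ℓ F fun j => D j j := by
  have hdiag : ∀ {i j}, i ≤ j → D j i = D i i := by
    intro i j hij
    induction j, hij using Nat.le_induction with
    | base => rfl
    | succ j hij ih => rw [hDD j i hij, ih]
  have hidem : ∀ n, IsIdempotentElem (D n n) := fun n => (hD n).2.1 n le_rfl
  have hsucc : ∀ n, D n n * D (n + 1) (n + 1) = D (n + 1) (n + 1) ∧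
      D (n + 1) (n + 1) * D n n = D (n + 1) (n + 1) := fun n => by
    rw [← hdiag n.le_succ]
    exact (hD (n + 1)).2.2 n n.lt_succ_self
  refine ⟨⟨fun n => (hD n).1.1 n, fun f hf j => ?_⟩, fun i j hij => ?_⟩
  · obtain ⟨k, hk, h⟩ := (hD j).1.2 f hf j
    exact ⟨k, hk, h.trans (hdiag hk)⟩
  · rw [Ultrafilter.uMul_eq_mul, Ultrafilter.uMul_eq_mul]
    exact ⟨mul_eq_left_of_forall_succ (x := fun n => D n n) hidem (fun n => (hsucc n).2) hij,
      mul_eq_right_of_forall_succ (x := fun n => D n n) hidem (fun n => (hsucc n).1) hij⟩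

end Ramsey

theorem fRamsey_of_fCoherent_general {S : Type*} [Semigroup S] (ℓ : S → ℕ)
    (hlay : ∀ s t : S, ℓ (s * t) = max (ℓ s) (ℓ t))
    (F : Set (S → S)) (hreg : ∀ f ∈ F, IsRegressive ℓ f)
    (U : ℕ → Ultrafilter S) (hcoh : FCoherent ℓ F U) :
    ∃ V : ℕ → Ultrafilter S, FRamsey ℓ F V := by
  obtain ⟨V₀, hV₀, hidem⟩ := exists_isIdempotentElem_of_isClosed ⟨U, hcoh⟩
    isClosed_setOf_fCoherent fun x hx y hy => FCoherent.mul hlay hreg hx hy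
  have h₀ : RamseyUpTo ℓ F 0 V₀ :=
    ⟨hV₀, fun i hi => Nat.le_zero.1 hi ▸ congrFun hidem 0, fun i hi => absurd hi i.not_lt_zero⟩
  obtain ⟨D, hD⟩ := exists_seq_of_forall_exists_succ ⟨V₀, h₀⟩ fun j V hV =>
    hV.exists_succ hlay hreg
  exact ⟨_, fRamsey_of_ramseyUpTo (fun j => (hD j).1) fun j => (hD j).2⟩

/-- If a layered semigroup `(S, ℓ)` with a locally finite collection `F` of regressive
maps admits an `F`-coherent sequence of ultrafilters, then it admits an `F`-Ramsey
sequence of ultrafilters. -/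
theorem fRamsey_of_fCoherent {S : Type*} [Semigroup S] (ℓ : S → ℕ)
    (hlay : ∀ s t : S, ℓ (s * t) = max (ℓ s) (ℓ t))
    (F : Set (S → S)) (hreg : ∀ f ∈ F, IsRegressive ℓ f)
    (hlf : IsLocallyFinite ℓ F)
    (U : ℕ → Ultrafilter S) (hcoh : FCoherent ℓ F U) :
    ∃ V : ℕ → Ultrafilter S, FRamsey ℓ F V :=
  fRamsey_of_fCoherent_general ℓ hlay F hreg U hcoh
end

section
/- (Gowers' FIN_k theorem.) For every n ∈ ℕ, every r ≥ 1, and every coloring c : FIN → {0,…,r−1}, there exists a sequence (f_i)_{i≥1} of elements of FIN_n with pairwise disjoint supports such that for every k ≤ n the set FIN_k ∩ { T^{m_1}∘f_{n_1} + T^{m_2}∘f_{n_2} + ⋯ + T^{m_ℓ}∘f_{n_ℓ} : ℓ ≥ 1, n_1 < n_2 < ⋯ < n_ℓ, m_1,…,m_ℓ ∈ ℕ } is c-monochromatic (c is constant on it), where T^m denotes the m-fold iterate of the tetris operation T. -/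
/-- `f` is a member of `FIN`: a finitely supported function `ℕ → ℕ`. -/
def IsFIN (f : ℕ → ℕ) : Prop := (Function.support f).Finite

/-- `f` is a member of `FIN_k`: a finitely supported function whose maximum value is
exactly `k`. -/
def IsFINk (k : ℕ) (f : ℕ → ℕ) : Prop :=
  IsFIN f ∧ (∀ n, f n ≤ k) ∧ ∃ n, f n = k

/-- The tetris operation `T(n) = max(n − 1, 0)`. -/
def tetris : ℕ → ℕ := fun n => n - 1

/-- The set of all sums `T^{m₁} ∘ f_{n₁} + ⋯ + T^{m_ℓ} ∘ f_{n_ℓ}` with `ℓ ≥ 1`,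
`n₁ < ⋯ < n_ℓ` and `m₁, …, m_ℓ ∈ ℕ`. -/
def TetrisCombo (x : ℕ → ℕ → ℕ) : Set (ℕ → ℕ) :=
  { g | ∃ (m : ℕ) (idx : Fin (m + 1) → ℕ) (its : Fin (m + 1) → ℕ),
      StrictMono idx ∧
      g = ∑ a : Fin (m + 1), (tetris^[its a]) ∘ (x (idx a)) }

/-!
Gowers' ultrafilter argument. Under addition of ultrafilters, the cofinite ultrafilters on `FIN_k`
form a compact right-topological semigroup `γFIN_k`, and since `T` is additive on disjointly
supported functions, `U ↦ T(U)` is a homomorphism on them. Lifting idempotents through `T` with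
Ellis' lemma gives idempotents `U₀ = pure 0, U₁, U₂, …` with `U_k ∈ γFIN_k`, `T(U_{k+1}) = U_k`
and `U_j + U_k = U_{max j k}`, hence `T^{n-k}(U_n) = U_k`. Each `U_k` contains a colour class of
`FIN_k`. A Galvin–Glazer construction then picks `x₀, x₁, …` so generic for `U_n` that all the
`T^{n-k} x_i` are generic for `U_k`; consequently every sum `T^{m₁} x_{i₁} + ⋯ + T^{mₗ} x_{iₗ}`
with `i₁ < ⋯ < iₗ` and maximum `k` lies in the large colour class of `FIN_k`.
-/

open Filter Function

attribute [local instance] Ultrafilter.add Ultrafilter.addSemigroup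

section LevelFS

variable {M ι : Type*} [SemilatticeSup ι]

/-- `LevelFS y k g`: `g = y i₁ k₁ + ⋯ + y iₗ kₗ` for some `i₁ < ⋯ < iₗ` and levels
`k₁ ⊔ ⋯ ⊔ kₗ = k`; a levelled version of `Hindman.FS`. -/
inductive LevelFS [AddSemigroup M] : Stream' (ι → M) → ι → M → Prop
  | head (y : Stream' (ι → M)) (k : ι) : LevelFS y k (y.head k)
  | tail (y : Stream' (ι → M)) (k : ι) (g : M) : LevelFS y.tail k g → LevelFS y k g
  | cons (y : Stream' (ι → M)) (j k : ι) (g : M) :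
      LevelFS y.tail k g → LevelFS y (j ⊔ k) (y.head j + g)

theorem LevelFS.of_drop [AddSemigroup M] {y : Stream' (ι → M)} {k : ι} {g : M} :
    ∀ d, LevelFS (y.drop d) k g → LevelFS y k g
  | 0, h => h
  | d + 1, h => of_drop d (.tail _ _ _ (by rwa [Stream'.tail_drop']))

theorem LevelFS.exists_of_sum [AddCommMonoid M] (y : Stream' (ι → M)) {m : ℕ}
    (idx : Fin (m + 1) → ℕ) (hidx : StrictMono idx) (lev : Fin (m + 1) → ι) :
    ∃ k, LevelFS y k (∑ a, y.get (idx a) (lev a)) := by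
  suffices ∀ d ≤ idx 0, ∃ k, LevelFS (y.drop d) k (∑ a, y.get (idx a) (lev a)) from
    (this 0 (Nat.zero_le _)).imp fun _ => LevelFS.of_drop 0
  induction m with
  | zero =>
    intro d hd
    refine ⟨lev 0, LevelFS.of_drop (idx 0 - d) ?_⟩
    rw [Stream'.drop_drop, Nat.add_sub_cancel' hd, Fin.sum_univ_one, ← Stream'.head_drop y (idx 0)]
    exact .head _ _
  | succ m ih =>
    intro d hd
    obtain ⟨k, hk⟩ := ih (idx ∘ Fin.succ) (hidx.comp Fin.strictMono_succ) (lev ∘ Fin.succ)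
      (idx 0 + 1) (hidx (Fin.succ_pos 0))
    refine ⟨lev 0 ⊔ k, LevelFS.of_drop (idx 0 - d) ?_⟩
    rw [Stream'.drop_drop, Nat.add_sub_cancel' hd, Fin.sum_univ_succ,
      ← Stream'.head_drop y (idx 0)]
    exact .cons _ _ _ _ (by rwa [Stream'.tail_drop'])

variable [AddSemigroup M]

/-- A stage of the construction: every later sum of level `k` must land in `B k`, every later
generator in `C`. -/
structure LevelFS.Stage (U : ι → Ultrafilter M) (V : Ultrafilter M) (Y : Set M) where
  B : ι → Set M
  C : Set M
  B_mem : ∀ k, B k ∈ U k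
  C_mem : C ∈ V
  C_subset : C ⊆ Y

variable [Finite ι] {U : ι → Ultrafilter M} {V : Ultrafilter M} {Y : Set M}

theorem LevelFS.Stage.exists_step (hU : ∀ j k, U j + U k = U (j ⊔ k)) (τ : ι → M → M)
    (hτ : ∀ k, V.map (τ k) = U k) (Q : M → Set M) (hQ : ∀ x ∈ Y, Q x ∈ V)
    (s : LevelFS.Stage U V Y) :
    ∃ x ∈ s.C, (∀ k, τ k x ∈ s.B k) ∧ ∃ s' : LevelFS.Stage U V Y,
      (∀ j k, ∀ h ∈ s'.B k, τ j x + h ∈ s.B (j ⊔ k)) ∧ (∀ k, s'.B k ⊆ s.B k) ∧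
        s'.C ⊆ s.C ∩ Q x := by
  have hstar (j : ι) : ∀ᶠ g in U j, g ∈ s.B j ∧ ∀ k, ∀ᶠ h in U k, g + h ∈ s.B (j ⊔ k) :=
    Eventually.and (s.B_mem j) <| eventually_all.2 fun k =>
      (Ultrafilter.eventually_add _ _ _).1 (hU j k ▸ s.B_mem (j ⊔ k))
  have hx : ∀ᶠ x in V, x ∈ s.C ∧
      ∀ j, τ j x ∈ s.B j ∧ ∀ k, ∀ᶠ h in U k, τ j x + h ∈ s.B (j ⊔ k) := by
    refine Eventually.and s.C_mem (eventually_all.2 fun j => ?_)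
    have := hstar j
    rwa [← hτ j, Ultrafilter.coe_map, eventually_map] at this
  obtain ⟨x, hxC, hx⟩ := hx.exists
  refine ⟨x, hxC, fun k => (hx k).1,
    ⟨fun k => s.B k ∩ {h | ∀ j, τ j x + h ∈ s.B (j ⊔ k)}, s.C ∩ Q x,
      fun k => inter_mem (s.B_mem k) (eventually_all.2 fun j => (hx j).2 k),
      inter_mem s.C_mem (hQ x (s.C_subset hxC)), Set.inter_subset_left.trans s.C_subset⟩,
    fun j k h hh => hh.2 j, fun k => Set.inter_subset_left, subset_rfl⟩

theorem exists_levelFS_subset (hU : ∀ j k, U j + U k = U (j ⊔ k)) (τ : ι → M → M)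
    (hτ : ∀ k, V.map (τ k) = U k) (A : ι → Set M) (hA : ∀ k, A k ∈ U k) (hY : Y ∈ V)
    (Q : M → Set M) (hQ : ∀ x ∈ Y, Q x ∈ V) :
    ∃ x : ℕ → M, (∀ i, x i ∈ Y) ∧ (∀ i j, i < j → x j ∈ Q (x i)) ∧
      ∀ k g, LevelFS (fun i k => τ k (x i)) k g → g ∈ A k := by
  choose gen hgenC hgenB next hnextB hnextB_subset hnextC using
    LevelFS.Stage.exists_step hU τ hτ Q hQ
  have hC_anti (s : LevelFS.Stage U V Y) (d : ℕ) : (next^[d] s).C ⊆ s.C := by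
    induction d with
    | zero => exact subset_rfl
    | succ d ih =>
      exact (iterate_succ_apply' next d s ▸ hnextC _).trans (Set.inter_subset_left.trans ih)
  let stage (i : ℕ) : LevelFS.Stage U V Y := next^[i] ⟨A, Y, hA, hY, subset_rfl⟩
  refine ⟨fun i => gen (stage i), fun i => (stage i).C_subset (hgenC _), fun i j hij => ?_, ?_⟩
  · obtain ⟨d, rfl⟩ := Nat.exists_eq_add_of_lt hij
    have : stage (i + d + 1) = next^[d] (next (stage i)) := by
      simp only [stage]
      rw [show i + d + 1 = d + (i + 1) by omega, iterate_add_apply, iterate_succ_apply']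
    exact (hnextC _ (hC_anti _ d (this ▸ hgenC _))).2
  · suffices ∀ y k g, LevelFS y k g →
        ∀ s, y = (fun i k => τ k (gen (next^[i] s))) → g ∈ s.B k from
      fun k g h => this _ k g h _ rfl
    intro y k g h
    induction h with
    | head y k => rintro s rfl; exact hgenB s k
    | tail y k g _ ih => rintro s rfl; exact hnextB_subset s k (ih (next s) rfl)
    | cons y j k g _ ih => rintro s rfl; exact hnextB s j k g (ih (next s) rfl)

end LevelFS

theorem Ultrafilter.pure_add_pure {M : Type*} [Add M] (a b : M) :
    (pure a + pure b : Ultrafilter M) = pure (a + b) :=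
  Ultrafilter.ext fun _ => Iff.rfl

theorem continuous_ultrafilter_map {α β : Type*} (m : α → β) : Continuous (Ultrafilter.map m) :=
  ultrafilterBasis_is_basis.continuous_iff.2 <| Set.forall_mem_range.2 fun s =>
    ultrafilter_isOpen_basic (m ⁻¹' s)

theorem apply_add_apply_eq_apply_max {X : Type*} [AddSemigroup X] {u : ℕ → X}
    (hu : ∀ k, u k + u k = u k) (hl : ∀ k, u k + u (k + 1) = u (k + 1))
    (hr : ∀ k, u (k + 1) + u k = u (k + 1)) (j k : ℕ) : u j + u k = u (max j k) := by
  have key (j k : ℕ) (hjk : j ≤ k) : u j + u k = u k ∧ u k + u j = u k := by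
    induction k, hjk using Nat.le_induction with
    | base => exact ⟨hu j, hu j⟩
    | succ k _ ih =>
      exact ⟨by rw [← hl k, ← add_assoc, ih.1], by rw [← hr k, add_assoc, ih.2]⟩
  rcases le_total j k with h | h
  · rw [max_eq_right h]; exact (key j k h).1
  · rw [max_eq_left h]; exact (key k j h).2

theorem IsFINk.eq_of_isFINk {j k : ℕ} {f : ℕ → ℕ} (hj : IsFINk j f) (hk : IsFINk k f) :
    j = k := by
  obtain ⟨-, hj, t, rfl⟩ := hj
  obtain ⟨-, hk, u, rfl⟩ := hk
  exact le_antisymm (hk t) (hj u)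

theorem IsFINk.eq_zero {f : ℕ → ℕ} (h : IsFINk 0 f) : f = 0 :=
  funext fun t => Nat.le_zero.1 (h.2.1 t)

theorem isFINk_single (N k : ℕ) : IsFINk k (Pi.single N k) := by
  refine ⟨(Set.finite_singleton N).subset Pi.support_single_subset, fun t => ?_, N, by simp⟩
  rcases eq_or_ne t N with rfl | h <;> simp [*]

theorem eq_zero_or_eq_zero_of_disjoint_support {α M : Type*} [Zero M] {f g : α → M}
    (hfg : Disjoint (support f) (support g)) (t : α) : f t = 0 ∨ g t = 0 := by
  by_contra! h
  exact Set.disjoint_left.1 hfg h.1 h.2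

theorem IsFINk.add {j k : ℕ} {f g : ℕ → ℕ} (hf : IsFINk j f) (hg : IsFINk k g)
    (hfg : Disjoint (support f) (support g)) : IsFINk (max j k) (f + g) := by
  have hzero := eq_zero_or_eq_zero_of_disjoint_support hfg
  obtain ⟨hf, hfk, t, rfl⟩ := hf
  obtain ⟨hg, hgk, u, rfl⟩ := hg
  refine ⟨(hf.union hg).subset (support_add f g), fun v => ?_, ?_⟩
  · have := hzero v; have := hfk v; have := hgk v
    simp only [Pi.add_apply]; omega
  · rcases le_total (f t) (g u) with h | h
    · refine ⟨u, ?_⟩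
      have := hzero u; have := hfk u
      simp only [Pi.add_apply]; omega
    · refine ⟨t, ?_⟩
      have := hzero t; have := hgk t
      simp only [Pi.add_apply]; omega

theorem tetris_iterate_apply (m v : ℕ) : tetris^[m] v = v - m := by
  induction m with
  | zero => rfl
  | succ m ih => rw [iterate_succ_apply', ih]; exact Nat.sub_sub v m 1

theorem tetris_comp_add {f g : ℕ → ℕ} (hfg : Disjoint (support f) (support g)) :
    tetris ∘ (f + g) = tetris ∘ f + tetris ∘ g := funext fun t => by
  have := eq_zero_or_eq_zero_of_disjoint_support hfg t
  simp only [comp_apply, Pi.add_apply, tetris]; omega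

/-- `γFIN_k`: the cofinite ultrafilters on `FIN_k`. -/
def gammaFIN (k : ℕ) : Set (Ultrafilter (ℕ → ℕ)) :=
  {U | (∀ᶠ f in U, IsFINk k f) ∧
    ∀ s : Set ℕ, s.Finite → ∀ᶠ f : ℕ → ℕ in U, Disjoint s (support f)}

theorem gammaFIN_nonempty (k : ℕ) : (gammaFIN k).Nonempty := by
  refine ⟨(hyperfilter ℕ).map fun N => Pi.single N k, ?_, fun s hs => ?_⟩ <;>
    rw [Ultrafilter.coe_map, eventually_map]
  · exact .of_forall fun N => isFINk_single N k
  · filter_upwards [hs.compl_mem_hyperfilter] with N hN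
    exact (Set.disjoint_singleton_right.2 hN).mono_right Pi.support_single_subset

theorem isClosed_gammaFIN (k : ℕ) : IsClosed (gammaFIN k) := by
  have : gammaFIN k = {U | {f | IsFINk k f} ∈ U} ∩
      ⋂ s ∈ {s : Set ℕ | s.Finite}, {U | {f | Disjoint s (support f)} ∈ U} := by
    ext; simp only [gammaFIN, Set.mem_ofPred_eq, Set.mem_inter_iff, Set.mem_iInter]; rfl
  rw [this]
  exact (ultrafilter_isClosed_basic _).inter
    (isClosed_biInter fun _ _ => ultrafilter_isClosed_basic _)

theorem gammaFIN_add {j k : ℕ} {U V : Ultrafilter (ℕ → ℕ)} (hU : U ∈ gammaFIN j)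
    (hV : V ∈ gammaFIN k) : U + V ∈ gammaFIN (max j k) := by
  refine ⟨(Ultrafilter.eventually_add _ _ _).2 ?_,
    fun s hs => (Ultrafilter.eventually_add _ _ _).2 ?_⟩
  · filter_upwards [hU.1] with f hf
    filter_upwards [hV.1, hV.2 _ hf.1] with g hg hfg
    exact hf.add hg hfg
  · filter_upwards [hU.2 s hs] with f hf
    filter_upwards [hV.2 s hs] with g hg
    exact Set.disjoint_union_right.2 ⟨hf, hg⟩ |>.mono_right (support_add f g)

theorem map_tetris_add {U V : Ultrafilter (ℕ → ℕ)} (hU : ∀ᶠ f in U, IsFIN f)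
    (hV : ∀ s : Set ℕ, s.Finite → ∀ᶠ g : ℕ → ℕ in V, Disjoint s (support g)) :
    (U + V).map (tetris ∘ ·) = U.map (tetris ∘ ·) + V.map (tetris ∘ ·) := by
  refine Ultrafilter.ext fun s => ?_
  show (∀ᶠ f in U, ∀ᶠ g in V, tetris ∘ (f + g) ∈ s) ↔
    ∀ᶠ f in U, ∀ᶠ g in V, tetris ∘ f + tetris ∘ g ∈ s
  refine eventually_congr (hU.mono fun f hf => eventually_congr ?_)
  filter_upwards [hV _ hf] with g hfg
  rw [tetris_comp_add hfg]

theorem exists_map_tetris_eq {k : ℕ} {U : Ultrafilter (ℕ → ℕ)} (hU : U ∈ gammaFIN k) :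
    ∃ V ∈ gammaFIN (k + 1), V.map (tetris ∘ ·) = U := by
  cases k with
  | zero =>
    have eq_pure_zero (W : Ultrafilter (ℕ → ℕ)) (hW : ∀ᶠ f in W, f = (0 : ℕ → ℕ)) : W = pure 0 := by
      obtain ⟨_, rfl, hx⟩ := W.eq_pure_of_finite_mem (Set.finite_singleton 0) hW
      exact hx
    obtain ⟨V, hV⟩ := gammaFIN_nonempty 1
    refine ⟨V, hV, ?_⟩
    refine (eq_pure_zero _ ?_).trans (eq_pure_zero U (hU.1.mono fun _ => IsFINk.eq_zero)).symm
    rw [Ultrafilter.coe_map, eventually_map]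
    exact hV.1.mono fun f hf => funext fun t => by
      simp only [comp_apply, tetris, Pi.zero_apply]; have := hf.2.1 t; omega
  | succ k =>
    let raise (f : ℕ → ℕ) (t : ℕ) : ℕ := if f t = 0 then 0 else f t + 1
    have support_raise (f : ℕ → ℕ) : support (raise f) = support f := by
      ext t; by_cases h : f t = 0 <;> simp [raise, h]
    refine ⟨U.map raise, ⟨?_, fun s hs => ?_⟩, ?_⟩
    · rw [Ultrafilter.coe_map, eventually_map]
      filter_upwards [hU.1] with f ⟨hf, hfk, t, ht⟩
      refine ⟨by rwa [IsFIN, support_raise], fun u => ?_, t, by simp [raise, ht]⟩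
      have := hfk u
      simp only [raise]; split <;> omega
    · rw [Ultrafilter.coe_map, eventually_map]
      filter_upwards [hU.2 s hs] with f hf
      rwa [support_raise]
    · rw [Ultrafilter.map_map]
      convert U.map_id
      funext f t
      simp only [comp_apply, raise, tetris, id]; split <;> omega

theorem exists_idempotent_lift {k : ℕ} {U : Ultrafilter (ℕ → ℕ)} (hU : U ∈ gammaFIN k)
    (hUU : U + U = U) (hTU : U.map (tetris ∘ ·) + U = U)
    (hUT : U + U.map (tetris ∘ ·) = U) :
    ∃ V ∈ gammaFIN (k + 1), V + V = V ∧ V.map (tetris ∘ ·) = U ∧ U + V = V ∧ V + U = V := by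
  let S := {V | V ∈ gammaFIN (k + 1) ∧ V.map (tetris ∘ ·) = U ∧ V + U = V}
  have hS : S.Nonempty := by
    obtain ⟨V, hV, hTV⟩ := exists_map_tetris_eq hU
    refine ⟨V + U, by simpa using gammaFIN_add hV hU, ?_, by rw [add_assoc, hUU]⟩
    rw [map_tetris_add (hV.1.mono fun _ => And.left) hU.2, hTV, hUT]
  have hS_closed : IsClosed S :=
    (isClosed_gammaFIN _).inter <| (isClosed_eq (continuous_ultrafilter_map _)
      continuous_const).inter (isClosed_eq (Ultrafilter.continuous_add_left U) continuous_id)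
  have hS_add : ∀ V ∈ S, ∀ W ∈ S, V + W ∈ S := by
    rintro V ⟨hV, hTV, hVU⟩ W ⟨hW, hTW, hWU⟩
    refine ⟨by simpa using gammaFIN_add hV hW, ?_, by rw [add_assoc, hWU]⟩
    rw [map_tetris_add (hV.1.mono fun _ => And.left) hW.2, hTV, hTW, hUU]
  obtain ⟨W, ⟨hW, hTW, hWU⟩, hWW⟩ := exists_idempotent_in_compact_add_subsemigroup
    Ultrafilter.continuous_add_left S hS hS_closed.isCompact hS_add
  refine ⟨U + W, by simpa using gammaFIN_add hU hW, ?_, ?_,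
    by rw [← add_assoc, hUU], by rw [add_assoc, hWU]⟩
  · rw [add_assoc, ← add_assoc W, hWU, hWW]
  · rw [map_tetris_add (hU.1.mono fun _ => And.left) hW.2, hTW, hTU]

theorem exists_tetris_chain : ∃ U : ℕ → Ultrafilter (ℕ → ℕ), (∀ k, U k ∈ gammaFIN k) ∧
    (∀ j k, U j + U k = U (max j k)) ∧ ∀ k d, (U k).map (tetris^[d] ∘ ·) = U (k - d) := by
  let P (k : ℕ) (U : Ultrafilter (ℕ → ℕ)) : Prop := U ∈ gammaFIN k ∧ U + U = U ∧
    U.map (tetris ∘ ·) + U = U ∧ U + U.map (tetris ∘ ·) = U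
  have step (k : ℕ) (U) (hU : P k U) :
      ∃ V, P (k + 1) V ∧ V.map (tetris ∘ ·) = U ∧ U + V = V ∧ V + U = V := by
    obtain ⟨V, hV, hVV, hTV, hUV, hVU⟩ := exists_idempotent_lift hU.1 hU.2.1 hU.2.2.1 hU.2.2.2
    exact ⟨V, ⟨hV, hVV, by rw [hTV, hUV], by rw [hTV, hVU]⟩, hTV, hUV, hVU⟩
  choose! next hnext using step
  let U (k : ℕ) : Ultrafilter (ℕ → ℕ) := Nat.rec (pure 0) next k
  have map_tetris_zero : (pure 0 : Ultrafilter (ℕ → ℕ)).map (tetris ∘ ·) = pure 0 :=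
    Ultrafilter.map_pure _ _
  have hP (k : ℕ) : P k (U k) := by
    induction k with
    | zero =>
      show P 0 (pure 0)
      refine ⟨⟨?_, fun s _ => ?_⟩, ?_, ?_, ?_⟩
      · exact Ultrafilter.mem_pure.2 ⟨by simp [IsFIN], fun _ => le_rfl, 0, rfl⟩
      · exact Ultrafilter.mem_pure.2 (by simp)
      all_goals simp only [map_tetris_zero, Ultrafilter.pure_add_pure, add_zero]
    | succ k ih => exact (hnext k _ ih).1
  have hT (k : ℕ) : (U k).map (tetris ∘ ·) = U (k - 1) := by
    cases k with
    | zero => exact map_tetris_zero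
    | succ k => exact (hnext k _ (hP k)).2.1
  refine ⟨U, fun k => (hP k).1, apply_add_apply_eq_apply_max (fun k => (hP k).2.1)
    (fun k => (hnext k _ (hP k)).2.2.1) (fun k => (hnext k _ (hP k)).2.2.2), fun k d => ?_⟩
  induction d generalizing k with
  | zero => exact Ultrafilter.map_id _
  | succ d ih =>
    have : (tetris^[d + 1] ∘ · : (ℕ → ℕ) → ℕ → ℕ) = (tetris^[d] ∘ ·) ∘ (tetris ∘ ·) := rfl
    rw [this, ← Ultrafilter.map_map, hT, ih, Nat.sub_sub, Nat.add_comm]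

theorem tetris_iterate_comp_of_le {n : ℕ} {f : ℕ → ℕ} (hf : ∀ t, f t ≤ n) (m : ℕ) :
    tetris^[n - (n - m)] ∘ f = tetris^[m] ∘ f :=
  funext fun t => by simp only [comp_apply, tetris_iterate_apply]; have := hf t; omega

theorem gowers_FINk_general (n r : ℕ) (c : (ℕ → ℕ) → Fin r) :
    ∃ x : ℕ → ℕ → ℕ, (∀ i, IsFINk n (x i)) ∧
      (∀ i j, i ≠ j → Disjoint (Function.support (x i)) (Function.support (x j))) ∧
      ∀ k ≤ n, ∀ g ∈ {h | IsFINk k h} ∩ TetrisCombo x,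
        ∀ g' ∈ {h | IsFINk k h} ∩ TetrisCombo x, c g = c g' := by
  obtain ⟨U, hU, hU_add, hU_map⟩ := exists_tetris_chain
  choose γ hγ using fun k => ((U k).map c).eq_pure_of_finite
  have hA (l : Fin (n + 1)) : ∀ᶠ g in U l, IsFINk l g ∧ c g = γ l := by
    have : {γ l} ∈ (U l).map c := by rw [hγ l]; exact Ultrafilter.mem_pure.2 rfl
    exact (hU l).1.and (Ultrafilter.mem_map.1 this)
  obtain ⟨x, hx_FIN, hx_disj, hx_color⟩ := exists_levelFS_subset
    (U := fun l : Fin (n + 1) => U l) (fun j k => hU_add j k) (fun l => (tetris^[n - l] ∘ ·))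
    (fun l => by rw [hU_map, Nat.sub_sub_self (Nat.lt_succ_iff.1 l.2)]) _ hA (hU n).1
    (fun f => {g | Disjoint (support f) (support g)}) (fun f hf => (hU n).2 _ hf.1)
  have color_eq (k : ℕ) (g : ℕ → ℕ) (hg : IsFINk k g) (hgx : g ∈ TetrisCombo x) : c g = γ k := by
    obtain ⟨m, idx, its, hidx, rfl⟩ := hgx
    obtain ⟨l, hl⟩ := LevelFS.exists_of_sum (fun i (l : Fin (n + 1)) => tetris^[n - l] ∘ x i)
      idx hidx fun a => ⟨n - its a, by omega⟩
    simp only [Stream'.get, tetris_iterate_comp_of_le (hx_FIN _).2.1] at hl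
    obtain ⟨hgl, hcg⟩ := hx_color l _ hl
    rwa [hgl.eq_of_isFINk hg] at hcg
  refine ⟨x, hx_FIN, fun i j hij => ?_, fun k _ g hg g' hg' =>
    (color_eq k g hg.1 hg.2).trans (color_eq k g' hg'.1 hg'.2).symm⟩
  rcases hij.lt_or_gt with h | h
  · exact hx_disj i j h
  · exact (hx_disj j i h).symm

/-- Gowers' `FIN_k` theorem: for every finite coloring of `FIN` and every `n`, there is
a sequence of elements of `FIN_n` with pairwise disjoint supports, all of whose tetris
combinations lying in `FIN_k` (for each `k ≤ n`) form a monochromatic set. -/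
theorem gowers_FINk (n r : ℕ) (hr : 1 ≤ r) (c : (ℕ → ℕ) → Fin r) :
    ∃ x : ℕ → ℕ → ℕ, (∀ i, IsFINk n (x i)) ∧
      (∀ i j, i ≠ j → Disjoint (Function.support (x i)) (Function.support (x j))) ∧
      ∀ k ≤ n, ∀ g ∈ {h | IsFINk k h} ∩ TetrisCombo x,
        ∀ g' ∈ {h | IsFINk k h} ∩ TetrisCombo x, c g = c g' :=
  gowers_FINk_general n r c
end

section
/- (Hindman's finite unions theorem.) For every r ≥ 1 and every coloring c of the collection of nonempty finite subsets of ℕ with r colors, there exists a sequence (A_i)_{i≥1} of pairwise disjoint nonempty finite subsets of ℕ such that the set { A_{n_1} ∪ A_{n_2} ∪ ⋯ ∪ A_{n_ℓ} : ℓ ≥ 1, n_1 < n_2 < ⋯ < n_ℓ } of all finite unions of members of the sequence is c-monochromatic (c is constant on it). -/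
/-!
Color a positive integer `n` by `c` of the set of its binary digits. Hindman's finite sums
theorem gives a sequence `b` all of whose finite sums have the same color. Binary digits turn
sums into unions only when there are no carries, so we pass to sums `y k` of `b` over disjoint
blocks of indices, chosen by pigeonhole so that `2 ^ m ∣ y k` for an `m` exceeding every binary
digit of the earlier `y j`. The digit sets of the `y k` are then pairwise disjoint, each finite
union of them is the digit set of a finite sum of `b`, and so all these unions share one color.
-/

open Finset Function Hindman

theorem Hindman.pos_of_mem_FS {a : Stream' ℕ} (ha : ∀ i, 0 < a.get i) {n : ℕ} (hn : n ∈ FS a) :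
    0 < n := by
  induction hn with
  | head' a => exact ha 0
  | tail' a m _ ih => exact ih fun i => ha (i + 1)
  | cons' a m _ ih => exact Nat.add_pos_left (ha 0) m

theorem Hindman.FS.sum_sum_mem {M : Type*} [AddCommMonoid M] (a : Stream' M)
    {J : ℕ → Finset ℕ} (hJ : Pairwise (Disjoint on J)) (hJne : ∀ k, (J k).Nonempty)
    {t : Finset ℕ} (ht : t.Nonempty) : ∑ k ∈ t, ∑ i ∈ J k, a.get i ∈ FS a := by
  rw [← sum_biUnion (hJ.set_pairwise _)]
  exact FS.finsetSum a _ (biUnion_nonempty.mpr ⟨_, ht.choose_spec, hJne _⟩)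

theorem Nat.exists_Ico_sum_dvd (b : ℕ → ℕ) (n : ℕ) {d : ℕ} (hd : 0 < d) :
    ∃ k₁ k₂, n ≤ k₁ ∧ k₁ < k₂ ∧ d ∣ ∑ i ∈ Ico k₁ k₂, b i := by
  obtain ⟨k₁, hk₁, k₂, -, hlt, hmod⟩ := (Set.Ici_infinite n).exists_lt_map_eq_of_mapsTo
    (f := fun k => (∑ i ∈ range k, b i) % d) (fun k _ => Nat.mod_lt _ hd) (Set.finite_Iio d)
  refine ⟨k₁, k₂, hk₁, hlt, ?_⟩
  rw [← sum_range_add_sum_Ico b hlt.le] at hmod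
  simpa using (Nat.modEq_iff_dvd' (Nat.le_add_right _ _)).mp hmod

theorem Finset.equivBitIndices_subset_Ico {m y : ℕ} (h : 2 ^ m ∣ y) :
    equivBitIndices y ⊆ Ico m y := by
  intro i hi
  simp only [equivBitIndices_apply, List.mem_toFinset, Nat.mem_bitIndices] at hi
  refine mem_Ico.mpr ⟨?_, i.lt_two_pow_self.trans_le (Nat.ge_two_pow_of_testBit hi)⟩
  obtain ⟨z, rfl⟩ := h
  rw [Nat.testBit_two_pow_mul] at hi
  simpa using (Bool.and_eq_true_iff.mp hi).1

theorem Finset.equivBitIndices_symm_biUnion {t : Finset ℕ} {A : ℕ → Finset ℕ}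
    (hA : Pairwise (Disjoint on A)) :
    equivBitIndices.symm (t.biUnion A) = ∑ k ∈ t, equivBitIndices.symm (A k) :=
  sum_biUnion (hA.set_pairwise _)

theorem Monotone.pairwise_disjoint_of_subset_Ico {f : ℕ → ℕ} (hf : Monotone f)
    {A : ℕ → Finset ℕ} (hA : ∀ k, A k ⊆ Ico (f k) (f (k + 1))) : Pairwise (Disjoint on A) :=
  fun j k hjk => by
    rw [onFun, ← disjoint_coe]
    exact (hf.pairwise_disjoint_on_Ico_succ hjk).mono
      (by simpa using coe_subset.mpr (hA j)) (by simpa using coe_subset.mpr (hA k))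

theorem exists_blocks_with_disjoint_bitIndices (b : ℕ → ℕ) :
    ∃ J : ℕ → Finset ℕ, (∀ k, (J k).Nonempty) ∧ Pairwise (Disjoint on J) ∧
      Pairwise (Disjoint on fun k => equivBitIndices (∑ i ∈ J k, b i)) := by
  choose l r hl hlr hdvd using fun m => Nat.exists_Ico_sum_dvd b m (Nat.two_pow_pos m)
  -- `T k` exceeds every index and every binary digit used by the first `k` blocks.
  let T : ℕ → ℕ := fun k => Nat.rec 0 (fun _ m => r m + ∑ i ∈ Ico (l m) (r m), b i) k
  have hT (k : ℕ) : T (k + 1) = r (T k) + ∑ i ∈ Ico (l (T k)) (r (T k)), b i := rfl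
  have hT_mono : Monotone T := monotone_nat_of_le_succ fun k => by
    have := hl (T k); have := hlr (T k); rw [hT]; omega
  refine ⟨fun k => Ico (l (T k)) (r (T k)), fun k => nonempty_Ico.mpr (hlr _),
    hT_mono.pairwise_disjoint_of_subset_Ico fun k => ?_,
    hT_mono.pairwise_disjoint_of_subset_Ico fun k => ?_⟩
  · exact Ico_subset_Ico (hl _) (hT k ▸ Nat.le_add_right _ _)
  · exact (equivBitIndices_subset_Ico (hdvd _)).trans
      (Ico_subset_Ico_right (hT k ▸ Nat.le_add_left _ _))

theorem hindman_finite_unions_general (r : ℕ) (c : Finset ℕ → Fin r) :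
    ∃ A : ℕ → Finset ℕ, (∀ i, (A i).Nonempty) ∧
      (∀ i j, i ≠ j → Disjoint (A i) (A j)) ∧
      ∀ B ∈ {B : Finset ℕ | ∃ t : Finset ℕ, t.Nonempty ∧ B = t.biUnion A},
        ∀ C ∈ {B : Finset ℕ | ∃ t : Finset ℕ, t.Nonempty ∧ B = t.biUnion A},
          c B = c C := by
  obtain ⟨_, ⟨k, rfl⟩, b, hb⟩ := FS_partition_regular (fun _ => 1 : Stream' ℕ)
    (Set.range fun k => {n | 0 < n ∧ c (equivBitIndices n) = k}) (Set.finite_range _)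
    fun n hn => ⟨_, ⟨c (equivBitIndices n), rfl⟩, pos_of_mem_FS (fun _ => one_pos) hn, rfl⟩
  obtain ⟨J, hJne, hJ, hA⟩ := exists_blocks_with_disjoint_bitIndices b.get
  set A := fun k => equivBitIndices (∑ i ∈ J k, b.get i)
  have hunion (t : Finset ℕ) : t.biUnion A = equivBitIndices (∑ k ∈ t, ∑ i ∈ J k, b.get i) :=
    equivBitIndices.symm_apply_eq.mp <| by
      rw [equivBitIndices_symm_biUnion hA]; simp only [A, Equiv.symm_apply_apply]
  have hsum (t : Finset ℕ) (ht : t.Nonempty) :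
      0 < ∑ k ∈ t, ∑ i ∈ J k, b.get i ∧ c (equivBitIndices (∑ k ∈ t, ∑ i ∈ J k, b.get i)) = k :=
    hb (FS.sum_sum_mem b hJ hJne ht)
  refine ⟨A, fun j => ?_, hA, ?_⟩
  · have hpos : 0 < ∑ i ∈ J j, b.get i := by simpa using (hsum {j} (singleton_nonempty j)).1
    rw [nonempty_iff_ne_empty, Ne, ← Equiv.eq_symm_apply, equivBitIndices_symm_apply, sum_empty]
    exact hpos.ne'
  · rintro _ ⟨t, ht, rfl⟩ _ ⟨u, hu, rfl⟩
    rw [hunion, hunion, (hsum t ht).2, (hsum u hu).2]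

/-- Hindman's finite unions theorem: for every finite coloring of the nonempty finite
subsets of `ℕ` there is a sequence of pairwise disjoint nonempty finite sets all of
whose finite unions receive the same color. -/
theorem hindman_finite_unions (r : ℕ) (hr : 1 ≤ r) (c : Finset ℕ → Fin r) :
    ∃ A : ℕ → Finset ℕ, (∀ i, (A i).Nonempty) ∧
      (∀ i j, i ≠ j → Disjoint (A i) (A j)) ∧
      ∀ B ∈ {B : Finset ℕ | ∃ t : Finset ℕ, t.Nonempty ∧ B = t.biUnion A},
        ∀ C ∈ {B : Finset ℕ | ∃ t : Finset ℕ, t.Nonempty ∧ B = t.biUnion A},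
          c B = c C :=
  hindman_finite_unions_general r c
end

section
/- Let A be a nonempty finite alphabet and W = ⋃_{k∈ℕ} W_k the Graham–Rothschild semigroup over A. Then there exists a sequence (ν_i)_{i∈ℕ} of ultrafilters on W with W_i ∈ ν_i for every i, such that for every strong infinite parameter word w̃ and every i ∈ ℕ there exists j ≤ i with Ultrafilter.map (u ↦ u[w̃]) ν_i = ν_j. (That is, the sequence is coherent with respect to all substitution maps given by strong infinite parameter words.) -/
/-- A word over the alphabet `A` extended by variable symbols: letters are either
elements of `A` (`Sum.inl a`) or variables (`Sum.inr i` encodes the variable `x_{i+1}`).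
A word is a finite tuple of letters together with its length. -/
def Word (A : Type*) : Type _ := Σ n : ℕ, Fin n → A ⊕ ℕ

/-- `w` is a `k`-parameter word: every variable occurring in it is among
`x_1, …, x_k` (encoded as `Sum.inr 0, …, Sum.inr (k-1)`), each of them occurs, and
their first occurrences appear in increasing order. -/
def IsPWord (A : Type*) (k : ℕ) {n : ℕ} (w : Fin n → A ⊕ ℕ) : Prop :=
  (∀ p i, w p = Sum.inr i → i < k) ∧
  (∀ i, i < k → ∃ p, w p = Sum.inr i) ∧
  (∀ q j, w q = Sum.inr (j + 1) → ∃ p, p < q ∧ w p = Sum.inr j)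

/-- `W_k` as a subset of `Word A`: the set of `k`-parameter words of arbitrary
finite length. -/
def WLayer (A : Type*) (k : ℕ) : Set (Word A) := { w | IsPWord A k w.2 }

/-- Concatenation of words. -/
def wcat {A : Type*} (u v : Word A) : Word A := ⟨u.1 + v.1, Fin.append u.2 v.2⟩

/-- An infinite parameter word: a function `ℕ → A ⊕ ℕ` (position `p` holds the
`(p+1)`-st letter; `Sum.inr i` encodes `x_{i+1}`) in which every variable occurs and
the first occurrences of `x_1, x_2, …` appear in increasing order. -/
def IsInfPWord (A : Type*) (w : ℕ → A ⊕ ℕ) : Prop :=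
  (∀ i : ℕ, ∃ p, w p = Sum.inr i) ∧
  (∀ q j, w q = Sum.inr (j + 1) → ∃ p, p < q ∧ w p = Sum.inr j)

/-- Substitution of an infinite parameter word `w` into a word `u`: every occurrence of
the variable `x_{i+1}` in `u` is replaced by the letter `w i`. -/
def wsubst {A : Type*} (u : Word A) (w : ℕ → A ⊕ ℕ) : Word A :=
  ⟨u.1, fun p => Sum.elim Sum.inl w (u.2 p)⟩


/-- A strong infinite parameter word: a function `ℕ → A ⊕ ℕ` in which every variable
occurs, and such that whenever `x_{i+1}` occurs at position `p` and `x_{j+1}` occurs at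
position `q` with `p ≤ q`, then `i ≤ j` (all occurrences appear in order). -/
def IsStrongInfPWord (A : Type*) (w : ℕ → A ⊕ ℕ) : Prop :=
  (∀ i : ℕ, ∃ p, w p = Sum.inr i) ∧
  (∀ p q i j, w p = Sum.inr i → w q = Sum.inr j → p ≤ q → i ≤ j)

/-!
Ultrafilters on `W` form a compact semigroup in which each map `U ↦ U V` is continuous. An
idempotent `p` with `W₀ ∈ p`, taken in a minimal closed left ideal of `{U | W₀ ∈ U}`, satisfies
`p e = p` for every idempotent `e` there with `e p = e`. Below `p` pick an idempotent `q` with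
`W₁ ∈ q` and `p q = q = q p`. Substituting a constant letter `a` for `x₁` in `q` yields such an
`e`, hence `q[a] = (p q)[a] = p q[a] = p`.

Let `ρₖ` be `q` with `x₁` renamed to `x_{k+1}`, and `ν₀ = p`, `ν_{k+1} = νₖ ρₖ`. Substitution by
`w̃` is a homomorphism of words, hence of ultrafilters, and it sends `νᵢ ρᵢ` to `νᵢ[w̃] q[w̃(i)]`.
If the first `i` letters of a strong `w̃` use exactly the variables `x₁, …, xⱼ`, then `w̃(i)` is a
constant, `x_{j+1}` or `xⱼ`, and correspondingly `νⱼ p = νⱼ`, `νⱼ ρⱼ = ν_{j+1}` and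
`νⱼ ρ_{j-1} = νⱼ` (as `ρ_{j-1}` is idempotent).
-/

namespace Ultrafilter

attribute [local instance] Ultrafilter.mul

variable {M : Type*} [Mul M]

theorem mem_mul_of_forall_mul_mem {U V : Ultrafilter M} {s t r : Set M} (hs : s ∈ U)
    (ht : t ∈ V) (h : ∀ a ∈ s, ∀ b ∈ t, a * b ∈ r) : r ∈ U * V :=
  (eventually_mul U V (· ∈ r)).2 <|
    Filter.mem_of_superset hs fun a ha => Filter.mem_of_superset ht fun b hb => h a ha b hb

theorem map_mul_of_map_mul {N : Type*} [Mul N] {f : M → N} (hf : ∀ a b, f (a * b) = f a * f b)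
    (U V : Ultrafilter M) : (U * V).map f = U.map f * V.map f :=
  ext fun s => by
    simp only [← mem_coe, ← Filter.eventually_mem_set,
      eventually_mul, coe_map, Filter.eventually_map, hf]

theorem map_eq_self {α : Type*} {f : α → α} {U : Ultrafilter α}
    (h : ∀ᶠ x in (U : Filter α), f x = x) : U.map f = U :=
  coe_injective <| by
    rw [coe_map, Filter.map_congr h, Filter.map_id']

end Ultrafilter

namespace GrahamRothschild

section CompactSemigroup

variable {M : Type*} [Semigroup M] [TopologicalSpace M]

def IsClosedLeftIdeal (D L : Set M) : Prop :=
  L.Nonempty ∧ IsClosed L ∧ L ⊆ D ∧ ∀ x ∈ D, ∀ y ∈ L, x * y ∈ L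

theorem exists_minimal_isClosedLeftIdeal [T2Space M] {D : Set M} (hne : D.Nonempty)
    (hcpt : IsCompact D) (hmul : ∀ x ∈ D, ∀ y ∈ D, x * y ∈ D) :
    ∃ L, Minimal (IsClosedLeftIdeal D) L := by
  refine zorn_superset _ fun c hc hchain => ?_
  obtain rfl | hcne := c.eq_empty_or_nonempty
  · exact ⟨D, ⟨hne, hcpt.isClosed, subset_rfl, hmul⟩, by simp⟩
  have : Nonempty c := hcne.coe_sort
  obtain ⟨L₀, hL₀⟩ := hcne
  refine ⟨⋂₀ c, ⟨?_, isClosed_sInter fun L hL => (hc hL).2.1,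
    (Set.sInter_subset_of_mem hL₀).trans (hc hL₀).2.2.1, ?_⟩,
    fun L hL => Set.sInter_subset_of_mem hL⟩
  · rw [Set.sInter_eq_iInter]
    exact IsCompact.nonempty_iInter_of_directed_nonempty_isCompact_isClosed _
      (DirectedOn.directed_val (IsChain.directedOn hchain.symm)) (fun L => (hc L.2).1)
      (fun L => hcpt.of_isClosed_subset (hc L.2).2.1 (hc L.2).2.2.1) (fun L => (hc L.2).2.1)
  · exact fun x hx y hy =>
      Set.mem_sInter.2 fun L hL => (hc hL).2.2.2 x hx y (Set.mem_sInter.1 hy L hL)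

theorem image_mul_right_eq_of_minimal [T2Space M] (hcont : ∀ r : M, Continuous (· * r))
    {D L : Set M} (hcpt : IsCompact D) (hmul : ∀ x ∈ D, ∀ y ∈ D, x * y ∈ D)
    (hL : Minimal (IsClosedLeftIdeal D) L) {e : M} (he : e ∈ L) : (· * e) '' D = L := by
  obtain ⟨⟨x, hx⟩, -, hLD, hLmul⟩ := hL.prop
  refine hL.eq_of_subset ⟨⟨x * e, x, hLD hx, rfl⟩, (hcpt.image (hcont e)).isClosed, ?_, ?_⟩ ?_
  · rintro _ ⟨y, hy, rfl⟩
    exact hmul y hy e (hLD he)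
  · rintro x hx _ ⟨y, hy, rfl⟩
    exact ⟨x * y, hmul x hx y hy, mul_assoc x y e⟩
  · rintro _ ⟨y, hy, rfl⟩
    exact hLmul y hy e he

theorem exists_idempotent_absorbing [T2Space M] (hcont : ∀ r : M, Continuous (· * r))
    {D : Set M} (hne : D.Nonempty) (hcpt : IsCompact D) (hmul : ∀ x ∈ D, ∀ y ∈ D, x * y ∈ D) :
    ∃ p ∈ D, p * p = p ∧ ∀ e ∈ D, e * e = e → e * p = e → p * e = p := by
  obtain ⟨L, hL⟩ := exists_minimal_isClosedLeftIdeal hne hcpt hmul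
  obtain ⟨hLne, hLclosed, hLD, hLmul⟩ := hL.prop
  obtain ⟨p, hpL, hpp⟩ := exists_idempotent_in_compact_subsemigroup hcont L hLne
    (hcpt.of_isClosed_subset hLclosed hLD) fun x hx y hy => hLmul x (hLD hx) y hy
  refine ⟨p, hLD hpL, hpp, fun e heD hee hep => ?_⟩
  have heL : e ∈ L := hep ▸ hLmul e heD p hpL
  obtain ⟨y, -, hy : y * e = p⟩ : p ∈ (· * e) '' D :=
    (image_mul_right_eq_of_minimal hcont hcpt hmul hL heL).symm ▸ hpL
  calc p * e = y * (e * e) := by rw [← hy, mul_assoc]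
    _ = p := by rw [hee, hy]

theorem exists_idempotent_le [T2Space M] (hcont : ∀ r : M, Continuous (· * r)) {p : M}
    (hpp : p * p = p) {E : Set M} (hne : E.Nonempty) (hcpt : IsCompact E)
    (hmul : ∀ x ∈ E, ∀ y ∈ E, x * y ∈ E) (hmul_p : ∀ x ∈ E, x * p ∈ E)
    (hp_mul : ∀ x ∈ E, p * x ∈ E) : ∃ q ∈ E, q * q = q ∧ p * q = q ∧ q * p = q := by
  obtain ⟨x, hx⟩ := hne
  obtain ⟨r, ⟨hrE, hrp⟩, hrr⟩ := exists_idempotent_in_compact_subsemigroup hcont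
    {y ∈ E | y * p = y} ⟨x * p, hmul_p x hx, by rw [mul_assoc, hpp]⟩
    (hcpt.inter_right (isClosed_eq (hcont p) continuous_id))
    fun y ⟨hyE, hyp⟩ z ⟨hzE, hzp⟩ => ⟨hmul y hyE z hzE, by rw [mul_assoc, hzp]⟩
  refine ⟨p * r, hp_mul r hrE, ?_, by rw [← mul_assoc, hpp], by rw [mul_assoc, hrp]⟩
  calc p * r * (p * r) = p * (r * p * r) := by simp only [mul_assoc]
    _ = p * r := by rw [hrp, hrr]

end CompactSemigroup

variable {A : Type*}

theorem word_ext {u v : Word A} (hlen : u.1 = v.1)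
    (hletters : ∀ p, u.2 p = v.2 (Fin.cast hlen p)) : u = v := by
  obtain ⟨n, f⟩ := u
  obtain ⟨m, g⟩ := v
  obtain rfl : n = m := hlen
  exact congrArg (Sigma.mk n) (funext hletters)

theorem wcat_assoc (u v t : Word A) : wcat (wcat u v) t = wcat u (wcat v t) :=
  word_ext (Nat.add_assoc _ _ _) fun p => congrFun (Fin.append_assoc u.2 v.2 t.2) p

instance : Semigroup (Word A) where
  mul := wcat
  mul_assoc := wcat_assoc

theorem wcat_mem_wLayer_max {u v : Word A} {k l : ℕ} (hu : u ∈ WLayer A k)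
    (hv : v ∈ WLayer A l) : wcat u v ∈ WLayer A (max k l) := by
  obtain ⟨hu_lt, hu_occ, hu_first⟩ := hu
  obtain ⟨hv_lt, hv_occ, hv_first⟩ := hv
  refine ⟨fun p i hp => ?_, fun i hi => ?_, fun q j hq => ?_⟩
  · induction p using Fin.addCases with
    | left p => exact (hu_lt p i (by simpa [wcat] using hp)).trans_le (le_max_left k l)
    | right p => exact (hv_lt p i (by simpa [wcat] using hp)).trans_le (le_max_right k l)
  · rcases lt_or_ge i k with hik | hik
    · obtain ⟨p, hp⟩ := hu_occ i hik
      exact ⟨Fin.castAdd _ p, by simpa [wcat] using hp⟩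
    · obtain ⟨p, hp⟩ := hv_occ i (by omega)
      exact ⟨Fin.natAdd _ p, by simpa [wcat] using hp⟩
  · induction q using Fin.addCases with
    | left q =>
      obtain ⟨p, hpq, hp⟩ := hu_first q j (by simpa [wcat] using hq)
      exact ⟨Fin.castAdd _ p, hpq, by simpa [wcat] using hp⟩
    | right q =>
      obtain ⟨p, hpq, hp⟩ := hv_first q j (by simpa [wcat] using hq)
      exact ⟨Fin.natAdd _ p, (Fin.natAdd_lt_natAdd_iff _).2 hpq, by simpa [wcat] using hp⟩

def OneVarWords (A : Type*) (m : ℕ) : Set (Word A) :=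
  {v | (∀ p i, v.2 p = Sum.inr i → i = m) ∧ ∃ p, v.2 p = Sum.inr m}

theorem wcat_mem_wLayer_succ {u v : Word A} {m : ℕ} (hu : u ∈ WLayer A m)
    (hv : v ∈ OneVarWords A m) : wcat u v ∈ WLayer A (m + 1) := by
  obtain ⟨hu_lt, hu_occ, hu_first⟩ := hu
  obtain ⟨hv_eq, p₀, hp₀⟩ := hv
  refine ⟨fun p i hp => ?_, fun i hi => ?_, fun q j hq => ?_⟩
  · induction p using Fin.addCases with
    | left p => exact (hu_lt p i (by simpa [wcat] using hp)).trans (Nat.lt_succ_self m)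
    | right p => exact (hv_eq p i (by simpa [wcat] using hp)).trans_lt (Nat.lt_succ_self m)
  · rcases (Nat.lt_succ_iff_lt_or_eq.1 hi) with hi | rfl
    · obtain ⟨p, hp⟩ := hu_occ i hi
      exact ⟨Fin.castAdd _ p, by simpa [wcat] using hp⟩
    · exact ⟨Fin.natAdd _ p₀, by simpa [wcat] using hp₀⟩
  · induction q using Fin.addCases with
    | left q =>
      obtain ⟨p, hpq, hp⟩ := hu_first q j (by simpa [wcat] using hq)
      exact ⟨Fin.castAdd _ p, hpq, by simpa [wcat] using hp⟩
    | right q =>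
      have hj : j + 1 = m := hv_eq q (j + 1) (by simpa [wcat] using hq)
      obtain ⟨p, hp⟩ := hu_occ j (by omega)
      refine ⟨Fin.castAdd _ p, Fin.lt_def.2 (p.2.trans_le (Nat.le_add_right _ _)), ?_⟩
      simpa [wcat] using hp

theorem wsubst_wcat (w : ℕ → A ⊕ ℕ) (u v : Word A) :
    wsubst (wcat u v) w = wcat (wsubst u w) (wsubst v w) :=
  congrArg (Sigma.mk _) <| funext fun p => by
    induction p using Fin.addCases <;> simp [wcat, wsubst]

theorem wsubst_wsubst (u : Word A) (w w' : ℕ → A ⊕ ℕ) :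
    wsubst (wsubst u w) w' = wsubst u fun i => Sum.elim Sum.inl w' (w i) :=
  congrArg (Sigma.mk _) <| funext fun p => by
    simp only [wsubst]
    cases u.2 p <;> rfl

theorem wsubst_of_mem_wLayer_zero {u : Word A} (hu : u ∈ WLayer A 0) (w : ℕ → A ⊕ ℕ) :
    wsubst u w = u :=
  congrArg (Sigma.mk _) <| funext fun p => by
    cases h : u.2 p with
    | inl a => rfl
    | inr i => exact absurd (hu.1 p i h) (Nat.not_lt_zero i)

theorem wsubst_const_inl_mem_wLayer_zero (u : Word A) (a : A) :
    wsubst u (fun _ => Sum.inl a) ∈ WLayer A 0 := by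
  have hno_var : ∀ p i, (wsubst u fun _ => Sum.inl a).2 p ≠ Sum.inr i := fun p i => by
    simp only [wsubst]
    cases u.2 p <;> simp
  exact ⟨fun p i hp => absurd hp (hno_var p i), fun i hi => absurd hi (Nat.not_lt_zero i),
    fun q j hq => absurd hq (hno_var q (j + 1))⟩

theorem wsubst_const_inr_mem_oneVarWords {u : Word A} (hu : u ∈ WLayer A 1) (m : ℕ) :
    wsubst u (fun _ => Sum.inr m) ∈ OneVarWords A m := by
  refine ⟨fun p i hp => ?_, ?_⟩
  · cases h : u.2 p <;> simp_all [wsubst]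
  · obtain ⟨p, hp⟩ := hu.2.1 0 Nat.one_pos
    exact ⟨p, by simp [wsubst, hp]⟩

def varsBefore (w : ℕ → A ⊕ ℕ) (i : ℕ) : Set ℕ := {s | ∃ t < i, w t = Sum.inr s}

theorem varsBefore_zero (w : ℕ → A ⊕ ℕ) : varsBefore w 0 = ∅ := by
  simp [varsBefore]

theorem varsBefore_succ_of_inl {w : ℕ → A ⊕ ℕ} {i : ℕ} {a : A} (h : w i = Sum.inl a) :
    varsBefore w (i + 1) = varsBefore w i := by
  ext s
  simp only [varsBefore, Set.mem_ofPred_eq, Nat.lt_succ_iff_lt_or_eq, or_and_right, exists_or,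
    exists_eq_left, h, reduceCtorEq, or_false]

theorem varsBefore_succ_of_inr {w : ℕ → A ⊕ ℕ} {i s : ℕ} (h : w i = Sum.inr s) :
    varsBefore w (i + 1) = insert s (varsBefore w i) := by
  ext r
  simp only [varsBefore, Set.mem_ofPred_eq, Set.mem_insert_iff, Nat.lt_succ_iff_lt_or_eq,
    or_and_right, exists_or, exists_eq_left, h, Sum.inr.injEq]
  exact or_comm.trans (or_congr_left eq_comm)

theorem _root_.IsStrongInfPWord.eq_or_succ_eq {w : ℕ → A ⊕ ℕ} (hw : IsStrongInfPWord A w)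
    {i j s : ℕ} (hvars : varsBefore w i = Set.Iio j) (hs : w i = Sum.inr s) :
    s = j ∨ s + 1 = j := by
  rcases lt_trichotomy s j with hsj | rfl | hjs
  · obtain ⟨t, hti, ht⟩ : j - 1 ∈ varsBefore w i := hvars ▸ Set.mem_Iio.2 (by omega)
    have := hw.2 t i _ _ ht hs hti.le
    omega
  · exact .inl rfl
  · obtain ⟨t, ht⟩ := hw.1 j
    have hit : i ≤ t := not_lt.1 fun hti => lt_irrefl j (hvars ▸ ⟨t, hti, ht⟩ : j ∈ Set.Iio j)
    have := hw.2 i t _ _ hs ht hit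
    omega

section CoherentSequence

attribute [local instance] Ultrafilter.mul Ultrafilter.semigroup

theorem mem_wLayer_mul {U V : Ultrafilter (Word A)} {k l : ℕ} (hU : WLayer A k ∈ U)
    (hV : WLayer A l ∈ V) : WLayer A (max k l) ∈ U * V :=
  Ultrafilter.mem_mul_of_forall_mul_mem hU hV fun _ hu _ hv => wcat_mem_wLayer_max hu hv

theorem map_wsubst_mul (w : ℕ → A ⊕ ℕ) (U V : Ultrafilter (Word A)) :
    (U * V).map (wsubst · w) = U.map (wsubst · w) * V.map (wsubst · w) :=
  Ultrafilter.map_mul_of_map_mul (wsubst_wcat w) U V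

theorem map_wsubst_of_wLayer_zero_mem {U : Ultrafilter (Word A)} (hU : WLayer A 0 ∈ U)
    (w : ℕ → A ⊕ ℕ) : U.map (wsubst · w) = U :=
  Ultrafilter.map_eq_self <| Filter.mem_of_superset hU fun _ hu => wsubst_of_mem_wLayer_zero hu w

theorem map_wsubst_const_inl_eq {p q : Ultrafilter (Word A)} (hp0 : WLayer A 0 ∈ p)
    (hp_abs : ∀ e : Ultrafilter (Word A), WLayer A 0 ∈ e → e * e = e → e * p = e → p * e = p)
    (hqq : q * q = q) (hpq : p * q = q) (hqp : q * p = q) (a : A) :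
    q.map (wsubst · fun _ => Sum.inl a) = p := by
  set σ : Word A → Word A := (wsubst · fun _ => Sum.inl a)
  have hσp : p.map σ = p := map_wsubst_of_wLayer_zero_mem hp0 _
  have he0 : WLayer A 0 ∈ q.map σ :=
    Ultrafilter.mem_map.2 <| Filter.univ_mem' fun u => wsubst_const_inl_mem_wLayer_zero u a
  have hee : q.map σ * q.map σ = q.map σ := by rw [← map_wsubst_mul, hqq]
  have hep : q.map σ * p = q.map σ := by
    conv_lhs => rw [← hσp]
    rw [← map_wsubst_mul, hqp]
  calc q.map σ = (p * q).map σ := by rw [hpq]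
    _ = p := by rw [map_wsubst_mul, hσp, hp_abs _ he0 hee hep]

theorem exists_idempotent_pair :
    ∃ p q : Ultrafilter (Word A), WLayer A 0 ∈ p ∧ p * p = p ∧ WLayer A 1 ∈ q ∧ q * q = q ∧
      q * p = q ∧ ∀ a : A, q.map (wsubst · fun _ => Sum.inl a) = p := by
  have hempty : (⟨0, Fin.elim0⟩ : Word A) ∈ WLayer A 0 :=
    ⟨fun p => p.elim0, fun i hi => absurd hi (Nat.not_lt_zero i), fun q => q.elim0⟩
  have hvar : (⟨1, fun _ => Sum.inr 0⟩ : Word A) ∈ WLayer A 1 :=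
    ⟨fun _ _ h => by cases h; exact Nat.one_pos, fun i hi => ⟨0, by rw [Nat.lt_one_iff.1 hi]⟩,
      fun _ _ h => by cases h⟩
  obtain ⟨p, hp0, hpp, hp_abs⟩ := exists_idempotent_absorbing Ultrafilter.continuous_mul_left
    (D := {U : Ultrafilter (Word A) | WLayer A 0 ∈ U})
    ⟨pure _, Ultrafilter.mem_pure.2 hempty⟩ (ultrafilter_isClosed_basic (WLayer A 0)).isCompact
    fun U hU V hV => by simpa using mem_wLayer_mul hU hV
  obtain ⟨q, hq1, hqq, hpq, hqp⟩ := exists_idempotent_le Ultrafilter.continuous_mul_left hpp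
    (E := {U : Ultrafilter (Word A) | WLayer A 1 ∈ U})
    ⟨pure _, Ultrafilter.mem_pure.2 hvar⟩ (ultrafilter_isClosed_basic (WLayer A 1)).isCompact
    (fun U hU V hV => by simpa using mem_wLayer_mul hU hV)
    (fun U hU => by simpa using mem_wLayer_mul hU hp0)
    (fun U hU => by simpa using mem_wLayer_mul hp0 hU)
  exact ⟨p, q, hp0, hpp, hq1, hqq, hqp, map_wsubst_const_inl_eq hp0 hp_abs hqq hpq hqp⟩

def coherentSeq (p q : Ultrafilter (Word A)) : ℕ → Ultrafilter (Word A)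
  | 0 => p
  | k + 1 => coherentSeq p q k * q.map (wsubst · fun _ => Sum.inr k)

variable {p q : Ultrafilter (Word A)}

theorem wLayer_mem_coherentSeq (hp0 : WLayer A 0 ∈ p) (hq1 : WLayer A 1 ∈ q) (k : ℕ) :
    WLayer A k ∈ coherentSeq p q k := by
  induction k with
  | zero => exact hp0
  | succ k ih =>
    have hρ : OneVarWords A k ∈ q.map (wsubst · fun _ => Sum.inr k) :=
      Ultrafilter.mem_map.2 <|
        Filter.mem_of_superset hq1 fun _ hu => wsubst_const_inr_mem_oneVarWords hu k
    exact Ultrafilter.mem_mul_of_forall_mul_mem ih hρ fun _ hu _ hv => wcat_mem_wLayer_succ hu hv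

theorem coherentSeq_mul_eq_self (hp0 : WLayer A 0 ∈ p) (hpp : p * p = p) (hqp : q * p = q) :
    ∀ k, coherentSeq p q k * p = coherentSeq p q k
  | 0 => hpp
  | k + 1 => by
    rw [coherentSeq, mul_assoc]
    congr 1
    rw [← map_wsubst_of_wLayer_zero_mem hp0 fun _ => .inr k, ← map_wsubst_mul, hqp]

theorem coherentSeq_succ_mul (hqq : q * q = q) (k : ℕ) :
    coherentSeq p q (k + 1) * q.map (wsubst · fun _ => Sum.inr k) = coherentSeq p q (k + 1) := by
  rw [coherentSeq, mul_assoc, ← map_wsubst_mul, hqq]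

theorem map_wsubst_coherentSeq_succ (w : ℕ → A ⊕ ℕ) (i : ℕ) :
    (coherentSeq p q (i + 1)).map (wsubst · w) =
      (coherentSeq p q i).map (wsubst · w) * q.map (wsubst · fun _ => w i) := by
  rw [coherentSeq, map_wsubst_mul, Ultrafilter.map_map]
  congr 2
  exact funext fun u => wsubst_wsubst u _ w

theorem _root_.IsStrongInfPWord.exists_map_wsubst_coherentSeq_eq {w : ℕ → A ⊕ ℕ}
    (hw : IsStrongInfPWord A w) (hp0 : WLayer A 0 ∈ p) (hpp : p * p = p) (hqq : q * q = q)
    (hqp : q * p = q) (hletter : ∀ a : A, q.map (wsubst · fun _ => Sum.inl a) = p) (i : ℕ) :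
    ∃ j ≤ i, varsBefore w i = Set.Iio j ∧
      (coherentSeq p q i).map (wsubst · w) = coherentSeq p q j := by
  induction i with
  | zero => exact ⟨0, le_rfl, by simp [varsBefore_zero], map_wsubst_of_wLayer_zero_mem hp0 w⟩
  | succ i ih =>
    obtain ⟨j, hji, hvars, hmap⟩ := ih
    rw [map_wsubst_coherentSeq_succ, hmap]
    cases hwi : w i with
    | inl a =>
      exact ⟨j, by omega, by rw [varsBefore_succ_of_inl hwi, hvars],
        by rw [hletter, coherentSeq_mul_eq_self hp0 hpp hqp]⟩
    | inr s =>
      rcases hw.eq_or_succ_eq hvars hwi with rfl | rfl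
      · refine ⟨s + 1, by omega, ?_, rfl⟩
        rw [varsBefore_succ_of_inr hwi, hvars, Set.Iio_insert, Set.Iio_add_one_eq_Iic]
      · refine ⟨s + 1, by omega, ?_, coherentSeq_succ_mul hqq s⟩
        rw [varsBefore_succ_of_inr hwi, hvars, Set.insert_eq_of_mem (Set.mem_Iio.2 s.lt_succ_self)]

end CoherentSequence

end GrahamRothschild

open GrahamRothschild

theorem gr_strong_coherent_sequence_general (A : Type*) :
    ∃ ν : ℕ → Ultrafilter (Word A),
      (∀ i, WLayer A i ∈ ν i) ∧
      ∀ w : ℕ → A ⊕ ℕ, IsStrongInfPWord A w →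
        ∀ i : ℕ, ∃ j ≤ i,
          Ultrafilter.map (fun u : Word A => wsubst u w) (ν i) = ν j := by
  obtain ⟨p, q, hp0, hpp, hq1, hqq, hqp, hletter⟩ := exists_idempotent_pair (A := A)
  refine ⟨coherentSeq p q, wLayer_mem_coherentSeq hp0 hq1, fun w hw i => ?_⟩
  obtain ⟨j, hji, -, hmap⟩ := hw.exists_map_wsubst_coherentSeq_eq hp0 hpp hqq hqp hletter i
  exact ⟨j, hji, hmap⟩

/-- There is a sequence `(ν_i)` of ultrafilters on the Graham–Rothschild semigroup `W`
over a nonempty finite alphabet, with `W_i ∈ ν_i`, which is coherent with respect to all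
substitution maps given by strong infinite parameter words: for every strong infinite
parameter word `w̃` and every `i` there is `j ≤ i` with
`Ultrafilter.map (u ↦ u[w̃]) ν_i = ν_j`. -/
theorem gr_strong_coherent_sequence (A : Type*) [Fintype A] [Nonempty A] :
    ∃ ν : ℕ → Ultrafilter (Word A),
      (∀ i, WLayer A i ∈ ν i) ∧
      ∀ w : ℕ → A ⊕ ℕ, IsStrongInfPWord A w →
        ∀ i : ℕ, ∃ j ≤ i,
          Ultrafilter.map (fun u : Word A => wsubst u w) (ν i) = ν j :=
  gr_strong_coherent_sequence_general A
end
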